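/- arXiv:1512.01414 — 6 statements merged into one kernel-verified Lean document; each statement's English description precedes it below -/
import Mathlib

section
/- For any three octonions u, v, w, the associator [u, v, w] = (uv)w - u(vw) is orthogonal to u: ⟨u, [u, v, w]⟩ = 0. -/
noncomputable section

open Quaternion

/-- The octonions, realized via the Cayley–Dickson construction over the quaternions. -/
abbrev Octo := ℍ[ℝ] × ℍ[ℝ]

namespace Octo

/-- Octonion multiplication (Cayley–Dickson): (z₁,z₂)(w₁,w₂) = (z₁w₁ - w̄₂z₂, z₂w̄₁ + w₂z₁). -/
def mul' (z w : Octo) : Octo :=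
  (z.1 * w.1 - star w.2 * z.2, z.2 * star w.1 + w.2 * z.1)

/-- Octonionic conjugation. -/
def conj' (x : Octo) : Octo := (star x.1, -x.2)

/-- The multiplicative unit of the octonions. -/
def one' : Octo := (1, 0)

/-- The embedding of the reals into the octonions. -/
def emb (x : ℝ) : Octo := (algebraMap ℝ ℍ[ℝ] x, 0)

/-- The real part of an octonion. -/
def re' (x : Octo) : ℝ := x.1.re

/-- The imaginary part of an octonion. -/
def im' (x : Octo) : Octo := x - emb (re' x)

/-- The standard Euclidean inner product on 𝕆 ≅ ℝ⁸. -/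
def inner' (x y : Octo) : ℝ := (inner ℝ x.1 y.1 : ℝ) + (inner ℝ x.2 y.2 : ℝ)

/-- The Euclidean norm on the octonions. -/
def norm' (x : Octo) : ℝ := Real.sqrt (inner' x x)

/-- The multiplicative inverse of a nonzero octonion. -/
def inv' (x : Octo) : Octo := (inner' x x)⁻¹ • conj' x

/-- The associator [u,v,w] = (uv)w - u(vw). -/
def assoc' (u v w : Octo) : Octo := mul' (mul' u v) w - mul' u (mul' v w)

/-- n-th power of an octonion. -/
def pow' (x : Octo) : ℕ → Octo
  | 0 => one'
  | n + 1 => mul' x (pow' x n)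

/-- A purely imaginary unit octonion: I ∈ 𝕊 iff I² = -1. -/
def IsImUnit (I : Octo) : Prop := mul' I I = - one'

/-- The point x + yI on the slice ℂ_I. -/
def pt (I : Octo) (p : ℝ × ℝ) : Octo := emb p.1 + p.2 • I

/-- The slice ℂ_I = ℝ ⊕ Iℝ. -/
def sliceSet (I : Octo) : Set Octo := {z | ∃ p : ℝ × ℝ, z = pt I p}

/-- e^{θI} = cos θ + (sin θ) I. -/
def expI (θ : ℝ) (I : Octo) : Octo := emb (Real.cos θ) + Real.sin θ • I

/-- Slice regularity: on every slice ℂ_I the function is holomorphic, i.e. real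
differentiable with ∂f/∂x + I ∂f/∂y = 0. -/
def SliceRegular (Ω : Set Octo) (f : Octo → Octo) : Prop :=
  ∀ I, IsImUnit I → ∀ p : ℝ × ℝ, pt I p ∈ Ω →
    ∃ fx fy : Octo,
      HasFDerivAt (fun q : ℝ × ℝ => f (pt I q))
        ((ContinuousLinearMap.fst ℝ ℝ ℝ).smulRight fx
          + (ContinuousLinearMap.snd ℝ ℝ ℝ).smulRight fy) p
      ∧ fx + mul' I fy = 0

/-- Symmetric slice domain: open, connected, meeting the real axis, with each slice a
domain, and axially symmetric. -/
def SymSliceDomain (Ω : Set Octo) : Prop :=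
  IsOpen Ω ∧ IsConnected Ω ∧ (∃ x : ℝ, emb x ∈ Ω) ∧
  (∀ I, IsImUnit I → IsConnected {p : ℝ × ℝ | pt I p ∈ Ω}) ∧
  (∀ I J, IsImUnit I → IsImUnit J → ∀ p : ℝ × ℝ, pt I p ∈ Ω → pt J p ∈ Ω)

/-- The open unit ball 𝔹 of the octonions. -/
def ball1 : Set Octo := {z | norm' z < 1}

end Octo

/-! Both `(uv)w` and `u(vw)` pair with `u` to `|u|²⟨v, w̄⟩`, by the composition-algebra identities
`⟨xw, y⟩ = ⟨x, yw̄⟩` and `⟨ux, uy⟩ = |u|²⟨x, y⟩`, the latter applied to `u(vw)` and `u·1`. -/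

namespace Octo

lemma inner'_comm (x y : Octo) : inner' x y = inner' y x := by
  simp only [inner', real_inner_comm]

lemma inner'_sub_right (x y z : Octo) : inner' x (y - z) = inner' x y - inner' x z := by
  simp only [inner', Prod.fst_sub, Prod.snd_sub, inner_sub_right]
  ring

lemma mul'_one' (x : Octo) : mul' x one' = x := by
  simp [mul', one']

lemma one'_mul' (x : Octo) : mul' one' x = x := by
  simp [mul', one']

lemma inner'_mul'_right (x y w : Octo) : inner' (mul' x w) y = inner' x (mul' y (conj' w)) := by
  simp only [inner', mul', conj', Quaternion.inner_def, re_mul, imI_mul, imJ_mul, imK_mul,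
    re_add, imI_add, imJ_add, imK_add, re_sub, imI_sub, imJ_sub, imK_sub,
    re_neg, imI_neg, imJ_neg, imK_neg, re_star, imI_star, imJ_star, imK_star]
  ring

lemma inner'_mul'_left_mul'_left (u x y : Octo) :
    inner' (mul' u x) (mul' u y) = inner' u u * inner' x y := by
  simp only [inner', mul', Quaternion.inner_def, re_mul, imI_mul, imJ_mul, imK_mul,
    re_add, imI_add, imJ_add, imK_add, re_sub, imI_sub, imJ_sub, imK_sub,
    re_star, imI_star, imJ_star, imK_star]
  ring

end Octo

open Octo in
/-- The associator [u,v,w] is orthogonal to u. -/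
theorem inner_assoc_eq_zero (u v w : Octo) : inner' u (assoc' u v w) = 0 := by
  have left_assoc : inner' u (mul' (mul' u v) w) = inner' u u * inner' v (conj' w) := by
    rw [inner'_comm, inner'_mul'_right, inner'_mul'_left_mul'_left]
  have right_assoc : inner' u (mul' u (mul' v w)) = inner' u u * inner' v (conj' w) :=
    calc inner' u (mul' u (mul' v w))
        = inner' (mul' u one') (mul' u (mul' v w)) := by rw [mul'_one']
      _ = inner' u u * inner' (mul' v w) one' := by rw [inner'_mul'_left_mul'_left, inner'_comm one']
      _ = inner' u u * inner' v (conj' w) := by rw [inner'_mul'_right, one'_mul']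
  rw [assoc', inner'_sub_right, left_assoc, right_assoc, sub_self]
end
end

section
/- Let f : Ω → 𝕆 be a slice regular function on a symmetric slice domain Ω ⊆ 𝕆. If there exists I ∈ 𝕊 such that the restriction of |f| to Ω_I attains a local maximum at some point of Ω_I, then f is constant on Ω. -/
noncomputable section

open Quaternion

/-!
Fix an imaginary unit K. Left multiplication by K is a real-linear isometry of 𝕆 with square
−1, i.e. a complex structure, and slice regularity says exactly that c ↦ f(Re c + (Im c) K) is
holomorphic for it. Transporting this complex structure to ℂⁿ by the coordinates
v ↦ (⟪b_k, v⟫ − i⟪b_k, Kv⟫)_k of an orthonormal basis (b_k) turns f on the slice Ω_K into an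
honest vector-valued holomorphic map whose norm is √2 |f|. On Ω_I the maximum principle for maps
into a strictly convex space makes f locally constant, and the identity principle on the connected
slice makes it constant on Ω_I, in particular on the real points of Ω. Since Ω is open these real
points accumulate at a real point of every slice Ω_K, so the identity principle makes f constant on
each Ω_K, and Ω is the union of its slices.
-/

namespace Octo

lemma mul'_add_right (x v w : Octo) : mul' x (v + w) = mul' x v + mul' x w := by
  simp only [mul', Prod.fst_add, Prod.snd_add, star_add, Prod.mk_add_mk, Prod.ext_iff]
  constructor <;> noncomm_ring

lemma mul'_smul_right (x : Octo) (r : ℝ) (v : Octo) : mul' x (r • v) = r • mul' x v := by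
  simp only [mul', Prod.smul_fst, Prod.smul_snd, Quaternion.star_smul, Prod.smul_mk, Prod.ext_iff]
  constructor <;> simp [smul_sub, smul_add]

def mulLeft (x : Octo) : Octo →ₗ[ℝ] Octo where
  toFun := mul' x
  map_add' := mul'_add_right x
  map_smul' := mul'_smul_right x

lemma inner'_self (v : Octo) : inner' v v = normSq v.1 + normSq v.2 := by
  rw [inner', inner_self, inner_self]

lemma isImUnit_iff {K : Octo} : IsImUnit K ↔ re' K = 0 ∧ inner' K K = 1 := by
  obtain ⟨a, b⟩ := K
  simp only [IsImUnit, re', mul', one', inner'_self, Prod.ext_iff, Prod.fst_neg, Prod.snd_neg,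
    neg_zero]
  constructor
  · rintro ⟨h1, h2⟩
    have hstar : star a = -a := by
      by_cases hb : b = 0
      · subst hb
        simp only [star_zero, zero_mul, sub_zero] at h1
        have ha : a ≠ 0 := by rintro rfl; simp at h1
        have hn : normSq a = 1 := by
          have := congrArg normSq h1
          simp only [map_mul, normSq_neg, map_one] at this
          nlinarith [normSq_nonneg (a := a)]
        have : a * (a + star a) = 0 := by
          rw [mul_add, h1, self_mul_star, hn]; simp
        exact eq_neg_of_add_eq_zero_right ((mul_eq_zero.mp this).resolve_left ha)
      · have : b * (star a + a) = 0 := by rw [mul_add]; exact h2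
        exact eq_neg_of_add_eq_zero_left ((mul_eq_zero.mp this).resolve_left hb)
    have hre := star_eq_neg.mp hstar
    refine ⟨hre, ?_⟩
    rw [← sq, sq_eq_neg_normSq.mpr hre, star_mul_self, ← neg_add', neg_inj, ← coe_add,
      ← coe_one] at h1
    exact coe_injective h1
  · rintro ⟨hre, hn⟩
    refine ⟨?_, by rw [star_eq_neg.mpr hre, mul_neg, neg_add_cancel]⟩
    rw [← sq, sq_eq_neg_normSq.mpr hre, star_mul_self, ← neg_add', ← coe_add, hn, coe_one]

lemma mul'_mul'_of_isImUnit {K : Octo} (hK : IsImUnit K) (v : Octo) :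
    mul' K (mul' K v) = -v := by
  obtain ⟨a, b⟩ := K
  obtain ⟨z, w⟩ := v
  obtain ⟨hre, hn⟩ := isImUnit_iff.mp hK
  rw [inner'_self] at hn
  have hone : ((normSq a : ℝ) : ℍ) + ((normSq b : ℝ) : ℍ) = 1 := by rw [← coe_add, hn, coe_one]
  have haa : a * a = -((normSq a : ℝ) : ℍ) := by rw [← sq, sq_eq_neg_normSq.mpr hre]
  simp only [mul', star_sub, star_add, star_mul, star_star, star_eq_neg.mpr hre, Prod.ext_iff,
    Prod.fst_neg, Prod.snd_neg]
  constructor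
  · have hcomm : z * ((normSq b : ℝ) : ℍ) = ((normSq b : ℝ) : ℍ) * z := (coe_commutes _ _).symm
    linear_combination (norm := noncomm_ring) haa * z - z * star_mul_self b - hone * z - hcomm
  · have hcomm : w * ((normSq a : ℝ) : ℍ) = ((normSq a : ℝ) : ℍ) * w := (coe_commutes _ _).symm
    linear_combination (norm := noncomm_ring) -self_mul_star b * w + w * haa - hone * w - hcomm

lemma inner'_eq_inner (v w : Octo) :
    inner' v w = inner ℝ (WithLp.toLp 2 v) (WithLp.toLp 2 w) := by
  rw [WithLp.prod_inner_apply]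
  rfl

lemma norm'_eq_norm (v : Octo) : norm' v = ‖WithLp.toLp 2 v‖ := by
  rw [norm', inner'_eq_inner, norm_eq_sqrt_real_inner]

lemma inner'_mul' (x y : Octo) :
    inner' (mul' x y) (mul' x y) = inner' x x * inner' y y := by
  simp only [inner'_self, mul', normSq_def', re_mul, imI_mul, imJ_mul, imK_mul, re_sub, imI_sub,
    imJ_sub, imK_sub, re_add, imI_add, imJ_add, imK_add, re_star, imI_star, imJ_star, imK_star]
  ring

lemma norm'_mul'_of_isImUnit {K : Octo} (hK : IsImUnit K) (v : Octo) :
    norm' (mul' K v) = norm' v := by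
  rw [norm', inner'_mul', (isImUnit_iff.mp hK).2, one_mul, norm']

lemma pt_eq_emb (K : Octo) (t : ℝ) : pt K (t, 0) = emb t := by
  simp [pt]

lemma exists_isImUnit_mem_sliceSet {I : Octo} (hI : IsImUnit I) (y : Octo) :
    ∃ K, IsImUnit K ∧ y ∈ sliceSet K := by
  by_cases him : im' y = 0
  · refine ⟨I, hI, (re' y, 0), ?_⟩
    rw [pt_eq_emb, ← sub_eq_zero]
    exact him
  have hr : 0 < norm' (im' y) := by
    rw [norm'_eq_norm, norm_pos_iff]
    simpa using him
  refine ⟨(norm' (im' y))⁻¹ • im' y, isImUnit_iff.mpr ⟨?_, ?_⟩, (re' y, norm' (im' y)), ?_⟩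
  · simp [re', im', emb]
  · rw [inner'_eq_inner, WithLp.toLp_smul, real_inner_smul_left, real_inner_smul_right,
      real_inner_self_eq_norm_sq, ← norm'_eq_norm]
    field_simp
  · rw [pt, smul_smul, mul_inv_cancel₀ hr.ne', one_smul, im']
    abel

end Octo

open Complex Filter Topology

namespace OrthonormalBasis

variable {ι V : Type*} [Fintype ι] [NormedAddCommGroup V] [InnerProductSpace ℝ V]

def complexCoords (b : OrthonormalBasis ι ℝ V) (J : V →ₗ[ℝ] V) :
    V →ₗ[ℝ] EuclideanSpace ℂ ι where
  toFun v := WithLp.toLp 2 fun k => (b.repr v k : ℂ) - I * (b.repr (J v) k : ℂ)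
  map_add' v w := by
    ext k
    simp only [map_add, PiLp.add_apply, ofReal_add]
    ring
  map_smul' r v := by
    ext k
    simp only [map_smul, PiLp.smul_apply, smul_eq_mul, ofReal_mul, RingHom.id_apply,
      Complex.real_smul]
    ring

variable (b : OrthonormalBasis ι ℝ V) (J : V →ₗ[ℝ] V)

lemma complexCoords_apply (v : V) (k : ι) :
    b.complexCoords J v k = (b.repr v k : ℂ) - I * (b.repr (J v) k : ℂ) := rfl

lemma complexCoords_injective : Function.Injective (b.complexCoords J) := by
  intro v w h
  apply b.repr.injective
  ext k
  simpa [complexCoords_apply] using congrArg re (congrFun (congrArg WithLp.ofLp h) k)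

lemma complexCoords_map_eq_I_smul (hJ : ∀ v, J (J v) = -v) (v : V) :
    b.complexCoords J (J v) = I • b.complexCoords J v := by
  ext k
  simp only [complexCoords_apply, hJ, map_neg, PiLp.neg_apply, PiLp.smul_apply, smul_eq_mul,
    ofReal_neg]
  linear_combination (b.repr (J v) k : ℂ) * I_sq

lemma norm_complexCoords_sq (v : V) :
    ‖b.complexCoords J v‖ ^ 2 = ‖v‖ ^ 2 + ‖J v‖ ^ 2 := by
  simp only [EuclideanSpace.norm_sq_eq, ← b.repr.norm_map v, ← b.repr.norm_map (J v),
    complexCoords_apply, ← Finset.sum_add_distrib]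
  refine Finset.sum_congr rfl fun k _ => ?_
  rw [Complex.sq_norm, Complex.normSq_apply]
  simp
  ring

end OrthonormalBasis

theorem differentiableAt_comp_re_im_of_hasFDerivAt {F : Type*} [NormedAddCommGroup F]
    [NormedSpace ℂ F] {g : ℝ × ℝ → F} {a : F} {c : ℂ}
    (hg : HasFDerivAt g ((ContinuousLinearMap.fst ℝ ℝ ℝ).smulRight a
      + (ContinuousLinearMap.snd ℝ ℝ ℝ).smulRight (I • a)) (c.re, c.im)) :
    DifferentiableAt ℂ (fun z : ℂ => g (z.re, z.im)) c := by
  refine (hasFDerivAt_of_restrictScalars ℝ (f' := (1 : ℂ →L[ℂ] ℂ).smulRight a)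
    (hg.comp c equivRealProdCLM.hasFDerivAt) ?_).differentiableAt
  ext z
  have hz : z • a = z.re • a + z.im • I • a := by
    rw [← Complex.coe_smul, ← Complex.coe_smul, smul_smul, ← add_smul, Complex.re_add_im]
  simpa using hz

lemma Complex.frequently_nhdsNE_ofReal {p : ℂ → Prop} {x : ℝ} (h : ∀ᶠ t : ℝ in 𝓝 x, p t) :
    ∃ᶠ z in 𝓝[≠] (x : ℂ), p z :=
  (continuous_ofReal.continuousWithinAt.tendsto_nhdsWithin (s := {x}ᶜ) (t := {(x : ℂ)}ᶜ)
    fun _ ↦ by simp).frequently (h.filter_mono nhdsWithin_le_nhds).frequently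

namespace Octo

lemma exists_complexEmbedding_mul' {K : Octo} (hK : IsImUnit K) :
    ∃ (n : ℕ) (L : Octo →L[ℝ] EuclideanSpace ℂ (Fin n)), Function.Injective L ∧
      (∀ v, L (mul' K v) = I • L v) ∧ ∀ v, ‖L v‖ = √2 * norm' v := by
  let e := WithLp.linearEquiv 2 ℝ Octo
  let b := stdOrthonormalBasis ℝ (WithLp 2 Octo)
  let J := e.symm.toLinearMap ∘ₗ mulLeft K ∘ₗ e.toLinearMap
  have hJ : ∀ v, J (J v) = -v := fun v => by simp [J, mulLeft, mul'_mul'_of_isImUnit hK]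
  refine ⟨_, (b.complexCoords J ∘ₗ e.symm.toLinearMap).toContinuousLinearMap,
    (b.complexCoords_injective J).comp e.symm.injective,
    fun v => b.complexCoords_map_eq_I_smul J hJ (e.symm v), fun v => ?_⟩
  have hv : ‖e.symm v‖ = norm' v := (norm'_eq_norm v).symm
  have hJv : ‖J (e.symm v)‖ = norm' v := by
    rw [← norm'_mul'_of_isImUnit hK v, norm'_eq_norm]
    rfl
  have h := b.norm_complexCoords_sq J (e.symm v)
  rw [hv, hJv, ← two_mul] at h
  change ‖b.complexCoords J (e.symm v)‖ = _
  rw [← Real.sqrt_sq (norm_nonneg _), h, Real.sqrt_mul zero_le_two,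
    Real.sqrt_sq (hv ▸ norm_nonneg _)]

def slice (K : Octo) (c : ℂ) : Octo := pt K (c.re, c.im)

lemma continuous_slice (K : Octo) : Continuous (slice K) := by
  unfold slice pt emb
  fun_prop

lemma slice_ofReal (K : Octo) (t : ℝ) : slice K t = emb t := by
  simp [slice, pt]

lemma mem_sliceSet_iff {K z : Octo} : z ∈ sliceSet K ↔ ∃ c, slice K c = z :=
  ⟨fun ⟨p, hp⟩ => ⟨equivRealProd.symm p, by simp [slice, hp]⟩,
    fun ⟨c, hc⟩ => ⟨(c.re, c.im), hc.symm⟩⟩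

lemma SymSliceDomain.isPreconnected_slice_preimage {Ω : Set Octo} (hΩ : SymSliceDomain Ω)
    {K : Octo} (hK : IsImUnit K) : IsPreconnected (slice K ⁻¹' Ω) :=
  equivRealProdCLM.toHomeomorph.isPreconnected_preimage.mpr (hΩ.2.2.2.1 K hK).isPreconnected

variable {Ω : Set Octo} {f : Octo → Octo} {K : Octo}

lemma SliceRegular.differentiableAt_comp_slice {E : Type*} [NormedAddCommGroup E]
    [NormedSpace ℂ E] (hf : SliceRegular Ω f) (hK : IsImUnit K) {L : Octo →L[ℝ] E}
    (hL : ∀ v, L (mul' K v) = I • L v) {c : ℂ} (hc : slice K c ∈ Ω) :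
    DifferentiableAt ℂ (fun z => L (f (slice K z))) c := by
  obtain ⟨fx, fy, hF, hCR⟩ := hf K hK (c.re, c.im) hc
  have hfy : fy = mul' K fx := by
    have h := congrArg (mulLeft K) hCR
    rw [map_add, map_zero] at h
    change mul' K fx + mul' K (mul' K fy) = 0 at h
    rw [mul'_mul'_of_isImUnit hK, add_neg_eq_zero] at h
    exact h.symm
  have hD : L.comp ((ContinuousLinearMap.fst ℝ ℝ ℝ).smulRight fx
      + (ContinuousLinearMap.snd ℝ ℝ ℝ).smulRight fy) = (ContinuousLinearMap.fst ℝ ℝ ℝ).smulRight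
      (L fx) + (ContinuousLinearMap.snd ℝ ℝ ℝ).smulRight (I • L fx) := by
    ext <;> simp [hfy, hL]
  exact differentiableAt_comp_re_im_of_hasFDerivAt (hD ▸ L.hasFDerivAt.comp _ hF)

lemma SliceRegular.eqOn_slice_of_frequently (hf : SliceRegular Ω f) (hΩ : SymSliceDomain Ω)
    (hK : IsImUnit K) {c₀ : ℂ} (hc₀ : slice K c₀ ∈ Ω) {v : Octo}
    (hfreq : ∃ᶠ c in 𝓝[≠] c₀, f (slice K c) = v) :
    ∀ c, slice K c ∈ Ω → f (slice K c) = v := by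
  obtain ⟨n, L, hLinj, hL, -⟩ := exists_complexEmbedding_mul' hK
  have hU : IsOpen (slice K ⁻¹' Ω) := hΩ.1.preimage (continuous_slice K)
  have hanalytic : AnalyticOnNhd ℂ (fun z => L (f (slice K z))) (slice K ⁻¹' Ω) :=
    DifferentiableOn.analyticOnNhd
      (fun c hc => (hf.differentiableAt_comp_slice hK hL hc).differentiableWithinAt) hU
  have hEq := hanalytic.eqOn_of_preconnected_of_frequently_eq analyticOnNhd_const
    (hΩ.isPreconnected_slice_preimage hK) hc₀ (hfreq.mono fun c hc => congrArg L hc)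
  exact fun c hc => hLinj (hEq hc)

lemma SliceRegular.eventually_eq_of_isLocalMax (hf : SliceRegular Ω f) (hΩ : IsOpen Ω)
    (hK : IsImUnit K) {c₀ : ℂ} (hc₀ : slice K c₀ ∈ Ω)
    (hmax : IsLocalMax (fun c => norm' (f (slice K c))) c₀) :
    ∀ᶠ c in 𝓝 c₀, f (slice K c) = f (slice K c₀) := by
  obtain ⟨n, L, hLinj, hL, hLnorm⟩ := exists_complexEmbedding_mul' hK
  have hdiff : ∀ᶠ c in 𝓝 c₀, DifferentiableAt ℂ (fun z => L (f (slice K z))) c :=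
    ((hΩ.preimage (continuous_slice K)).eventually_mem hc₀).mono
      fun c hc => hf.differentiableAt_comp_slice hK hL hc
  have hmaxL : IsLocalMax (norm ∘ fun z => L (f (slice K z))) c₀ :=
    hmax.mono fun c hc => by
      simp only [Function.comp_apply, hLnorm]
      gcongr
  exact (Complex.eventually_eq_of_isLocalMax_norm hdiff hmaxL).mono fun c hc => hLinj hc

lemma SliceRegular.eq_of_eventually_eq_emb (hf : SliceRegular Ω f) (hΩ : SymSliceDomain Ω)
    {J : Octo} (hJ : IsImUnit J) {x₀ : ℝ} (hx₀ : emb x₀ ∈ Ω) {v : Octo}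
    (h : ∀ᶠ t in 𝓝 x₀, f (emb t) = v) : ∀ z ∈ Ω, f z = v := by
  intro z hz
  obtain ⟨K, hK, hzK⟩ := exists_isImUnit_mem_sliceSet hJ z
  obtain ⟨c, rfl⟩ := mem_sliceSet_iff.mp hzK
  refine hf.eqOn_slice_of_frequently hΩ hK (c₀ := x₀) (by rwa [slice_ofReal]) ?_ c hz
  exact Complex.frequently_nhdsNE_ofReal (h.mono fun t ht => by rwa [slice_ofReal])

end Octo

open Octo in
/-- Maximum principle: if |f| restricted to a slice attains a local maximum, then f
is constant. -/
theorem maximum_principle (Ω : Set Octo) (hΩ : SymSliceDomain Ω)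
    (f : Octo → Octo) (hf : SliceRegular Ω f)
    (I : Octo) (hI : IsImUnit I)
    (z₀ : Octo) (hz₀ : z₀ ∈ Ω ∩ sliceSet I)
    (hmax : IsLocalMaxOn (fun z => norm' (f z)) (Ω ∩ sliceSet I) z₀) :
    ∀ z ∈ Ω, ∀ w ∈ Ω, f z = f w := by
  obtain ⟨x₀, hx₀⟩ := hΩ.2.2.1
  obtain ⟨hz₀Ω, hz₀I⟩ := hz₀
  obtain ⟨c₀, rfl⟩ := mem_sliceSet_iff.mp hz₀I
  have hopen : IsOpen (slice I ⁻¹' Ω) := hΩ.1.preimage (continuous_slice I)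
  have hmaxI : IsLocalMax (fun c => norm' (f (slice I c))) c₀ :=
    hmax.comp_tendsto (tendsto_nhdsWithin_iff.mpr ⟨(continuous_slice I).tendsto c₀,
      (hopen.eventually_mem hz₀Ω).mono fun c hc => ⟨hc, mem_sliceSet_iff.mpr ⟨c, rfl⟩⟩⟩)
  have hlocI := hf.eventually_eq_of_isLocalMax hΩ.1 hI hz₀Ω hmaxI
  have hconstI := hf.eqOn_slice_of_frequently hΩ hI hz₀Ω
    (hlocI.filter_mono nhdsWithin_le_nhds).frequently
  have hreal : ∀ᶠ t in 𝓝 x₀, f (emb t) = f (slice I c₀) := by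
    filter_upwards [(hopen.preimage continuous_ofReal).mem_nhds
      (show slice I x₀ ∈ Ω by rwa [slice_ofReal])] with t ht
    rw [← slice_ofReal I]
    exact hconstI t ht
  have hconst := hf.eq_of_eventually_eq_emb hΩ hI hx₀ hreal
  intro z hz w hw
  rw [hconst z hz, hconst w hw]
end
end

section
/- Let Ω ⊆ 𝕆 be a bounded domain and f : Ω → 𝕆 a continuous function such that f(Ω) is open. Let α ∈ Ω be a point with ρ := liminf_{w→∂Ω} |f(w) - f(α)| > 0. Then the open ball B(f(α), ρ) is contained in f(Ω). -/
noncomputable section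

open Quaternion

/-! The ball `B` about `f α` is connected and `f '' Ω` is open, so it suffices that
`f '' Ω ∩ B` is closed in `B`. If `y ∈ B` is a limit of values `f (w n)` with `w n ∈ Ω`
but not itself a value, a subsequence of `w` converges in the compact set `closure Ω` to
some `b`; continuity forbids `b ∈ Ω`, so `b ∈ frontier Ω`, and along the subsequence
`‖f (w n) - f α‖ → ‖y - f α‖ < ρ`, against the liminf bound. -/

open Filter Topology

theorem exists_seq_tendsto_frontier_of_mem_closure_image_of_notMem
    {X Y : Type*} [TopologicalSpace X] [FirstCountableTopology X]
    [TopologicalSpace Y] [FrechetUrysohnSpace Y] [T2Space Y]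
    {Ω : Set X} (hΩ : IsCompact (closure Ω)) {f : X → Y} (hf : ContinuousOn f Ω) {y : Y}
    (hy : y ∈ closure (f '' Ω)) (hy' : y ∉ f '' Ω) :
    ∃ w : ℕ → X, (∀ n, w n ∈ Ω) ∧ ∃ b ∈ frontier Ω,
      Tendsto w atTop (𝓝 b) ∧ Tendsto (f ∘ w) atTop (𝓝 y) := by
  obtain ⟨v, hv, hvy⟩ := mem_closure_iff_seq_limit.mp hy
  choose u huΩ hfu using hv
  obtain ⟨b, hb, φ, hφ, hub⟩ := hΩ.tendsto_subseq fun n => subset_closure (huΩ n)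
  have hfuy : Tendsto (f ∘ u ∘ φ) atTop (𝓝 y) := by
    simpa only [Function.comp_def, hfu] using hvy.comp hφ.tendsto_atTop
  have hbΩ : b ∉ Ω := fun hbΩ => hy' ⟨b, hbΩ, tendsto_nhds_unique
    ((hf b hbΩ).tendsto.comp (tendsto_nhdsWithin_iff.mpr ⟨hub, .of_forall fun n => huΩ _⟩)) hfuy⟩
  exact ⟨u ∘ φ, fun n => huΩ _, b, ⟨hb, fun h => hbΩ (interior_subset h)⟩, hub, hfuy⟩

theorem closure_image_inter_subset_of_le_liminf_frontier
    {X Y : Type*} [TopologicalSpace X] [FirstCountableTopology X]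
    [TopologicalSpace Y] [FrechetUrysohnSpace Y] [T2Space Y]
    {Ω : Set X} (hΩ : IsCompact (closure Ω)) {f : X → Y} (hf : ContinuousOn f Ω)
    {d : Y → ℝ} (hd : Continuous d) {ρ : ℝ}
    (hlim : ∀ w : ℕ → X, (∀ n, w n ∈ Ω) → ∀ b ∈ frontier Ω,
      Tendsto w atTop (𝓝 b) → ρ ≤ liminf (fun n => d (f (w n))) atTop) :
    closure (f '' Ω) ∩ {y | d y < ρ} ⊆ f '' Ω := by
  rintro y ⟨hy, hdy⟩
  by_contra hy'
  obtain ⟨w, hwΩ, b, hb, hwb, hfwy⟩ :=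
    exists_seq_tendsto_frontier_of_mem_closure_image_of_notMem hΩ hf hy hy'
  have hliminf : liminf (fun n => d (f (w n))) atTop = d y :=
    ((hd.tendsto y).comp hfwy).liminf_eq
  exact hdy.not_ge (hliminf ▸ hlim w hwΩ b hb hwb)

namespace Octo

theorem norm'_eq_norm_toLp (x : Octo) : norm' x = ‖WithLp.toLp 2 x‖ := by
  rw [WithLp.prod_norm_eq_of_L2, norm', inner', real_inner_self_eq_norm_sq,
    real_inner_self_eq_norm_sq]
  rfl

theorem continuous_norm' : Continuous norm' := by
  simp only [funext norm'_eq_norm_toLp]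
  fun_prop

theorem convex_setOf_norm'_sub_lt (c : Octo) (ρ : ℝ) : Convex ℝ {z | norm' (z - c) < ρ} := by
  have hball : {z | norm' (z - c) < ρ} =
      (WithLp.linearEquiv 2 ℝ Octo).symm ⁻¹' Metric.ball (WithLp.toLp 2 c) ρ := by
    ext z
    simp [norm'_eq_norm_toLp, dist_eq_norm]
  rw [hball]
  exact (convex_ball _ ρ).linear_preimage _

end Octo

open Octo in
theorem ball_subset_of_liminf_boundary_general (Ω : Set Octo)
    (hbdd : Bornology.IsBounded Ω)
    (f : Octo → Octo) (hcont : ContinuousOn f Ω) (himg : IsOpen (f '' Ω))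
    (α : Octo) (hα : α ∈ Ω) (ρ : ℝ) (hρ : 0 < ρ)
    (hlim : ∀ w : ℕ → Octo, (∀ n, w n ∈ Ω) → ∀ b ∈ frontier Ω,
      Filter.Tendsto w Filter.atTop (nhds b) →
      ρ ≤ Filter.liminf (fun n => norm' (f (w n) - f α)) Filter.atTop) :
    {z : Octo | norm' (z - f α) < ρ} ⊆ f '' Ω := by
  have hfα : f α ∈ {z | norm' (z - f α) < ρ} ∩ f '' Ω := by
    refine ⟨?_, α, hα, rfl⟩
    simpa [norm'_eq_norm_toLp] using hρ
  refine (convex_setOf_norm'_sub_lt (f α) ρ).isPreconnected.subset_of_closure_inter_subset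
    himg ⟨f α, hfα⟩ ?_
  exact closure_image_inter_subset_of_le_liminf_frontier hbdd.isCompact_closure hcont
    (continuous_norm'.comp (continuous_sub_right (f α))) hlim

open Octo in
/-- Topological covering lemma: if f is continuous on a bounded domain with open image
and lim inf of |f(w) - f(α)| towards the boundary is at least ρ > 0, then the ball
B(f(α), ρ) is contained in f(Ω). -/
theorem ball_subset_of_liminf_boundary (Ω : Set Octo)
    (hopen : IsOpen Ω) (hconn : IsConnected Ω) (hbdd : Bornology.IsBounded Ω)
    (f : Octo → Octo) (hcont : ContinuousOn f Ω) (himg : IsOpen (f '' Ω))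
    (α : Octo) (hα : α ∈ Ω) (ρ : ℝ) (hρ : 0 < ρ)
    (hlim : ∀ w : ℕ → Octo, (∀ n, w n ∈ Ω) → ∀ b ∈ frontier Ω,
      Filter.Tendsto w Filter.atTop (nhds b) →
      ρ ≤ Filter.liminf (fun n => norm' (f (w n) - f α)) Filter.atTop) :
    {z : Octo | norm' (z - f α) < ρ} ⊆ f '' Ω :=
  ball_subset_of_liminf_boundary_general Ω hbdd f hcont himg α hα ρ hρ hlim
end
end

section
/- Let φ : 𝔻 → 𝔻 be a holomorphic self-map of the unit disc, extending holomorphically to a neighborhood of 1, with φ(0) = 0 and φ(1) = 1. Set δ = φ'(1) (which is real and positive). Then for all t ∈ (-1, 1), Re φ(t) ≥ ((δ+1)t - (δ-1))/((δ+1) - (δ-1)t). -/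
/-!
By Schwarz–Pick, `φ` contracts the pseudo-hyperbolic distance `‖(z - a) / (1 - conj a * z)‖`.
Letting `a = r → 1⁻` along the radius, where `(1 - |φ r|²) / (1 - r²) → δ := Re φ'(1)`, this
becomes Julia's inequality `|1 - φ z|² / (1 - |φ z|²) ≤ δ |1 - z|² / (1 - |z|²)`.
The Schwarz lemma `|φ r| ≤ r` gives `δ ≥ 1`. Julia's inequality at `z = r → 1⁻` gives
`|φ'(1)|² ≤ δ²`, so `φ'(1)` is real. At `z = t` it implies
`(1 - Re φ t) / (1 + Re φ t) ≤ δ (1 - t) / (1 + t)`, and solving for `Re φ t` gives the bound.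
-/

open Metric Complex Filter Set
open scoped Topology ComplexConjugate

namespace Complex

noncomputable def discMobius (a z : ℂ) : ℂ := (z - a) / (1 - conj a * z)

theorem normSq_one_sub_conj_mul_sub_normSq_sub (a z : ℂ) :
    normSq (1 - conj a * z) - normSq (z - a) = (1 - normSq a) * (1 - normSq z) := by
  simp only [normSq_apply, sub_re, sub_im, mul_re, mul_im, one_re, one_im, conj_re, conj_im]
  ring

theorem one_sub_normSq_pos {z : ℂ} (hz : ‖z‖ < 1) : 0 < 1 - normSq z := by
  rw [← Complex.sq_norm]; nlinarith [norm_nonneg z]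

theorem one_sub_conj_mul_ne_zero {a z : ℂ} (ha : ‖a‖ < 1) (hz : ‖z‖ < 1) :
    1 - conj a * z ≠ 0 := by
  refine sub_ne_zero.2 fun h => ?_
  have : ‖conj a * z‖ < 1 := by
    rw [norm_mul, Complex.norm_conj]; nlinarith [norm_nonneg a, norm_nonneg z]
  simp [← h] at this

theorem one_sub_normSq_discMobius {a z : ℂ} (ha : ‖a‖ < 1) (hz : ‖z‖ < 1) :
    1 - normSq (discMobius a z) = (1 - normSq a) * (1 - normSq z) / normSq (1 - conj a * z) := by
  have hD : normSq (1 - conj a * z) ≠ 0 := normSq_eq_zero.not.2 (one_sub_conj_mul_ne_zero ha hz)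
  rw [discMobius, normSq_div, eq_div_iff hD, sub_mul, div_mul_cancel₀ _ hD, one_mul,
    ← normSq_one_sub_conj_mul_sub_normSq_sub]

theorem norm_discMobius_lt_one {a z : ℂ} (ha : ‖a‖ < 1) (hz : ‖z‖ < 1) :
    ‖discMobius a z‖ < 1 := by
  have h := one_sub_normSq_discMobius ha hz
  have : 0 < 1 - normSq (discMobius a z) := by
    rw [h]
    exact div_pos (mul_pos (one_sub_normSq_pos ha) (one_sub_normSq_pos hz))
      (normSq_pos.2 (one_sub_conj_mul_ne_zero ha hz))
  rw [← Complex.sq_norm] at this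
  nlinarith [norm_nonneg (discMobius a z)]

theorem mapsTo_discMobius {a : ℂ} (ha : ‖a‖ < 1) :
    MapsTo (discMobius a) (ball 0 1) (ball 0 1) := fun z hz => by
  rw [mem_ball_zero_iff] at hz ⊢; exact norm_discMobius_lt_one ha hz

theorem differentiableOn_discMobius {a : ℂ} (ha : ‖a‖ < 1) :
    DifferentiableOn ℂ (discMobius a) (ball 0 1) :=
  (differentiableOn_id.sub_const a).div (by fun_prop) fun z hz =>
    one_sub_conj_mul_ne_zero ha (mem_ball_zero_iff.1 hz)

@[simp] theorem discMobius_self (a : ℂ) : discMobius a a = 0 := by simp [discMobius]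

@[simp] theorem discMobius_neg_zero (a : ℂ) : discMobius (-a) 0 = a := by simp [discMobius]

theorem discMobius_neg_discMobius {a z : ℂ} (ha : ‖a‖ < 1) (hz : ‖z‖ < 1) :
    discMobius (-a) (discMobius a z) = z := by
  have hD := one_sub_conj_mul_ne_zero ha hz
  have hK := one_sub_conj_mul_ne_zero ha ha
  simp only [discMobius, map_neg, sub_neg_eq_add, neg_mul]
  rw [div_add' _ _ _ hD, mul_div_assoc', add_div' _ _ _ hD, div_div_div_cancel_right₀ hD,
    div_eq_iff (by convert hK using 1; ring)]
  ring

section SchwarzPick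

variable {φ : ℂ → ℂ} (hφ : DifferentiableOn ℂ φ (ball 0 1))
  (hmap : MapsTo φ (ball 0 1) (ball 0 1))
include hφ hmap

theorem norm_discMobius_apply_le {a z : ℂ} (ha : ‖a‖ < 1) (hz : ‖z‖ < 1) :
    ‖discMobius (φ a) (φ z)‖ ≤ ‖discMobius a z‖ := by
  have hφa : ‖φ a‖ < 1 := mem_ball_zero_iff.1 (hmap (mem_ball_zero_iff.2 ha))
  have hna : ‖-a‖ < 1 := by rwa [norm_neg]
  set g := discMobius (φ a) ∘ φ ∘ discMobius (-a)
  have hg : DifferentiableOn ℂ g (ball 0 1) :=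
    (differentiableOn_discMobius hφa).comp (hφ.comp (differentiableOn_discMobius hna)
      (mapsTo_discMobius hna)) (hmap.comp (mapsTo_discMobius hna))
  have hg_maps : MapsTo g (ball 0 1) (closedBall 0 1) :=
    ((mapsTo_discMobius hφa).comp (hmap.comp (mapsTo_discMobius hna))).mono_right
      ball_subset_closedBall
  have hg0 : g 0 = 0 := by simp [g]
  simpa [g, discMobius_neg_discMobius ha hz] using
    Complex.norm_le_norm_of_mapsTo_ball hg hg_maps hg0 (norm_discMobius_lt_one ha hz)

theorem normSq_one_sub_conj_mul_div_le {a z : ℂ} (ha : ‖a‖ < 1) (hz : ‖z‖ < 1) :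
    normSq (1 - conj (φ a) * φ z) / (1 - normSq (φ z)) ≤
      (1 - normSq (φ a)) / (1 - normSq a) * (normSq (1 - conj a * z) / (1 - normSq z)) := by
  have hφa : ‖φ a‖ < 1 := mem_ball_zero_iff.1 (hmap (mem_ball_zero_iff.2 ha))
  have hφz : ‖φ z‖ < 1 := mem_ball_zero_iff.1 (hmap (mem_ball_zero_iff.2 hz))
  have h : 1 - normSq (discMobius a z) ≤ 1 - normSq (discMobius (φ a) (φ z)) := by
    simp only [← Complex.sq_norm]
    gcongr
    exact norm_discMobius_apply_le hφ hmap ha hz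
  rw [one_sub_normSq_discMobius ha hz, one_sub_normSq_discMobius hφa hφz,
    div_le_div_iff₀ (normSq_pos.2 (one_sub_conj_mul_ne_zero ha hz))
      (normSq_pos.2 (one_sub_conj_mul_ne_zero hφa hφz))] at h
  rw [div_mul_div_comm, div_le_div_iff₀ (one_sub_normSq_pos hφz)
    (mul_pos (one_sub_normSq_pos ha) (one_sub_normSq_pos hz))]
  linarith

end SchwarzPick

/-- The horodiscs at `1` are the sublevel sets of `juliaRatio`. -/
noncomputable def juliaRatio (z : ℂ) : ℝ := normSq (1 - z) / (1 - normSq z)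

theorem juliaRatio_le_mul_juliaRatio {φ : ℂ → ℂ} (hφ : DifferentiableOn ℂ φ (ball 0 1))
    (hmap : MapsTo φ (ball 0 1) (ball 0 1)) {ι : Type*} {l : Filter ι} [l.NeBot] {w : ι → ℂ}
    (hw : ∀ᶠ i in l, w i ∈ ball 0 1) (hw1 : Tendsto w l (𝓝 1))
    (hφw : Tendsto (φ ∘ w) l (𝓝 1)) {δ : ℝ}
    (hδ : Tendsto (fun i => (1 - normSq (φ (w i))) / (1 - normSq (w i))) l (𝓝 δ))
    {z : ℂ} (hz : z ∈ ball 0 1) :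
    juliaRatio (φ z) ≤ δ * juliaRatio z := by
  have hlhs : Tendsto (fun i => normSq (1 - conj (φ (w i)) * φ z) / (1 - normSq (φ z))) l
      (𝓝 (juliaRatio (φ z))) := by
    have := ((by fun_prop : Continuous fun u : ℂ =>
      normSq (1 - conj u * φ z) / (1 - normSq (φ z))).tendsto 1).comp hφw
    simpa [juliaRatio, Function.comp_def] using this
  have hrhs : Tendsto (fun i => (1 - normSq (φ (w i))) / (1 - normSq (w i)) *
      (normSq (1 - conj (w i) * z) / (1 - normSq z))) l (𝓝 (δ * juliaRatio z)) := by
    have := ((by fun_prop : Continuous fun u : ℂ =>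
      normSq (1 - conj u * z) / (1 - normSq z)).tendsto 1).comp hw1
    simpa [juliaRatio, Function.comp_def] using hδ.mul this
  refine le_of_tendsto_of_tendsto hlhs hrhs (hw.mono fun i hi => ?_)
  exact normSq_one_sub_conj_mul_div_le hφ hmap (mem_ball_zero_iff.1 hi) (mem_ball_zero_iff.1 hz)

theorem ofReal_mem_ball_zero_one {r : ℝ} (hr : r ∈ Ioo (-1) 1) :
    (r : ℂ) ∈ ball (0 : ℂ) 1 := by
  rw [mem_ball_zero_iff, norm_real, Real.norm_eq_abs, abs_lt]; exact hr

section BoundaryFixedPoint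

variable {φ : ℂ → ℂ} {d : ℂ} (hd : HasDerivAt φ d 1) (h1 : φ 1 = 1)
include hd h1

theorem tendsto_one_sub_normSq_div_one_sub_normSq :
    Tendsto (fun r : ℝ => (1 - normSq (φ r)) / (1 - normSq (r : ℂ))) (𝓝[≠] 1) (𝓝 d.re) := by
  have hg : HasDerivAt (fun r : ℝ => ‖φ r‖ ^ 2) (2 * d.re) 1 := by
    simpa [h1, Complex.inner] using (hd.comp_ofReal (z := 1)).norm_sq
  have h2 : Tendsto (fun r : ℝ => 1 + r) (𝓝[≠] 1) (𝓝 2) :=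
    ((continuous_const.add continuous_id).tendsto' 1 2 one_add_one_eq_two).mono_left
      nhdsWithin_le_nhds
  have hslope := (hasDerivAt_iff_tendsto_slope.1 hg).div h2 two_ne_zero
  rw [mul_div_cancel_left₀ _ two_ne_zero] at hslope
  refine hslope.congr fun r => ?_
  simp only [Pi.div_apply, slope_def_field, Complex.sq_norm, ofReal_one, h1, map_one,
    normSq_ofReal, div_div]
  rw [← neg_div_neg_eq]
  ring_nf

variable (hφ : DifferentiableOn ℂ φ (ball 0 1)) (hmap : MapsTo φ (ball 0 1) (ball 0 1))
include hφ hmap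

theorem juliaRatio_le_re_mul_juliaRatio {z : ℂ} (hz : z ∈ ball 0 1) :
    juliaRatio (φ z) ≤ d.re * juliaRatio z := by
  have hl : Ioo (-1 : ℝ) 1 ∈ 𝓝[<] 1 := Ioo_mem_nhdsLT (by norm_num)
  have hw1 : Tendsto ofReal (𝓝[<] (1 : ℝ)) (𝓝 1) :=
    (continuous_ofReal.tendsto' 1 1 ofReal_one).mono_left nhdsWithin_le_nhds
  refine juliaRatio_le_mul_juliaRatio hφ hmap (Filter.mem_of_superset hl
    fun r hr => ofReal_mem_ball_zero_one hr) hw1 ?_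
    ((tendsto_one_sub_normSq_div_one_sub_normSq hd h1).mono_left (nhdsLT_le_nhdsNE 1)) hz
  simpa [h1] using hd.continuousAt.tendsto.comp hw1

theorem one_le_re_of_map_zero (h0 : φ 0 = 0) : 1 ≤ d.re := by
  refine ge_of_tendsto ((tendsto_one_sub_normSq_div_one_sub_normSq hd h1).mono_left
    (nhdsLT_le_nhdsNE 1)) ?_
  filter_upwards [Ioo_mem_nhdsLT (show (-1 : ℝ) < 1 by norm_num)] with r hr
  have hr' := mem_ball_zero_iff.1 (ofReal_mem_ball_zero_one hr)
  have hschwarz : ‖φ r‖ ≤ ‖(r : ℂ)‖ :=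
    Complex.norm_le_norm_of_mapsTo_ball hφ (hmap.mono_right ball_subset_closedBall) h0 hr'
  rw [one_le_div (one_sub_normSq_pos hr'), ← Complex.sq_norm, ← Complex.sq_norm]
  gcongr

theorem im_eq_zero_of_hasDerivAt : d.im = 0 := by
  have hslope : Tendsto (fun r : ℝ => normSq (1 - φ r) / normSq (1 - (r : ℂ))) (𝓝[<] 1)
      (𝓝 (normSq d)) := by
    refine ((continuous_normSq.tendsto d).comp ((hasDerivAt_iff_tendsto_slope.1
      (hd.comp_ofReal (z := 1))).mono_left (nhdsLT_le_nhdsNE 1))).congr fun r => ?_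
    rw [Function.comp_apply, slope_def_module, real_smul, ← normSq_div]
    push_cast
    rw [h1, inv_mul_eq_div, ← neg_div_neg_eq, neg_sub, neg_sub]
  have hbound : normSq d ≤ d.re * d.re := by
    refine le_of_tendsto_of_tendsto hslope (((tendsto_one_sub_normSq_div_one_sub_normSq hd
      h1).mono_left (nhdsLT_le_nhdsNE 1)).const_mul d.re) ?_
    filter_upwards [Ioo_mem_nhdsLT (show (-1 : ℝ) < 1 by norm_num)] with r hr
    have hr' := ofReal_mem_ball_zero_one hr
    have hj := juliaRatio_le_re_mul_juliaRatio hd h1 hφ hmap hr'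
    have hQ := one_sub_normSq_pos (mem_ball_zero_iff.1 (hmap hr'))
    have hS : 0 < normSq (1 - (r : ℂ)) := normSq_pos.2 (by exact_mod_cast (sub_pos.2 hr.2).ne')
    rw [juliaRatio, juliaRatio, div_le_iff₀ hQ] at hj
    rw [div_le_iff₀ hS]
    calc normSq (1 - φ r)
        ≤ d.re * (normSq (1 - (r : ℂ)) / (1 - normSq r)) * (1 - normSq (φ r)) := hj
      _ = d.re * ((1 - normSq (φ r)) / (1 - normSq r)) * normSq (1 - (r : ℂ)) := by ring
  rw [normSq_apply] at hbound
  exact mul_self_eq_zero.1 (le_antisymm (by linarith) (mul_self_nonneg _))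

end BoundaryFixedPoint

theorem one_sub_re_div_one_add_re_le_juliaRatio {w : ℂ} (hw : ‖w‖ < 1) :
    (1 - w.re) / (1 + w.re) ≤ juliaRatio w := by
  have hre : 0 < 1 + w.re := by linarith [neg_abs_le w.re, abs_re_le_norm w]
  rw [juliaRatio, div_le_div_iff₀ hre (one_sub_normSq_pos hw)]
  simp only [normSq_apply, sub_re, sub_im, one_re, one_im]
  nlinarith [mul_self_nonneg w.im]

theorem juliaRatio_ofReal {t : ℝ} (ht : t ≠ 1) : juliaRatio t = (1 - t) / (1 + t) := by
  have h : (1 : ℂ) - t = ((1 - t : ℝ) : ℂ) := by push_cast; ring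
  rw [juliaRatio, h, normSq_ofReal, normSq_ofReal,
    show 1 - t * t = (1 - t) * (1 + t) by ring, mul_div_mul_left _ _ (sub_ne_zero.2 ht.symm)]

theorem div_le_re_of_juliaRatio_le {w : ℂ} (hw : ‖w‖ < 1) {t δ : ℝ} (ht : t ∈ Ioo (-1) 1)
    (hδ : 0 ≤ δ) (h : juliaRatio w ≤ δ * juliaRatio t) :
    ((δ + 1) * t - (δ - 1)) / ((δ + 1) - (δ - 1) * t) ≤ w.re := by
  have hre : 0 < 1 + w.re := by linarith [neg_abs_le w.re, abs_re_le_norm w]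
  have h1t : 0 < 1 + t := by linarith [ht.1]
  have h := (one_sub_re_div_one_add_re_le_juliaRatio hw).trans h
  rw [juliaRatio_ofReal ht.2.ne, ← mul_div_assoc, div_le_div_iff₀ hre h1t] at h
  rw [div_le_iff₀ (by nlinarith [ht.2])]
  linarith

end Complex

/-- Minda's theorem: for a holomorphic self-map φ of the unit disc, extending
holomorphically to a neighborhood of 1, with φ(0) = 0 and φ(1) = 1, the boundary
derivative δ = φ'(1) is real and positive and
Re φ(t) ≥ ((δ+1)t - (δ-1))/((δ+1) - (δ-1)t) for all t ∈ (-1,1). -/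
theorem minda_radial_estimate (φ : ℂ → ℂ) (U : Set ℂ) (hU : IsOpen U)
    (h1U : (1 : ℂ) ∈ U)
    (hφ : DifferentiableOn ℂ φ (Metric.ball 0 1 ∪ U))
    (hmap : ∀ z ∈ Metric.ball (0 : ℂ) 1, φ z ∈ Metric.ball (0 : ℂ) 1)
    (h0 : φ 0 = 0) (hfix : φ 1 = 1) :
    (deriv φ 1).im = 0 ∧ 0 < (deriv φ 1).re ∧
      ∀ t : ℝ, t ∈ Set.Ioo (-1 : ℝ) 1 →
        (((deriv φ 1).re + 1) * t - ((deriv φ 1).re - 1)) /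
            (((deriv φ 1).re + 1) - ((deriv φ 1).re - 1) * t) ≤ (φ t).re := by
  have hdisc : DifferentiableOn ℂ φ (ball 0 1) := hφ.mono subset_union_left
  have hd : HasDerivAt φ (deriv φ 1) 1 :=
    (hφ.differentiableAt ((isOpen_ball.union hU).mem_nhds (Or.inr h1U))).hasDerivAt
  have hδ : 1 ≤ (deriv φ 1).re := one_le_re_of_map_zero hd hfix hdisc hmap h0
  refine ⟨im_eq_zero_of_hasDerivAt hd hfix hdisc hmap, by linarith, fun t ht => ?_⟩
  have ht' := ofReal_mem_ball_zero_one ht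
  exact div_le_re_of_juliaRatio_le (mem_ball_zero_iff.1 (hmap _ ht')) ht (by linarith)
    (juliaRatio_le_re_mul_juliaRatio hd hfix hdisc hmap ht')
end

section
/- Let f be a holomorphic self-map of the unit disc 𝔻 ⊂ ℂ, extending holomorphically to a neighborhood of the boundary point 1, with f(1) = 1. Then f'(1) is a positive real number and f'(1) ≥ 2 / Re((1 - f(0)² + f'(0))/(1 - f(0))²). -/
/-!
Write `P(z) = (1 - |z|²) / |1 - z|²` for the Poisson kernel at the boundary point `1`; it is the
real part of the Herglotz kernel `H(z) = (1 + z) / (1 - z)`. Letting `w = r ↑ 1` in the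
Schwarz–Pick inequality for the pair `(w, z)`, and using `(1 - |f r|²) / (1 - r²) → Re f'(1)`,
gives Julia's inequality `P(z) ≤ Re f'(1) · P(f z)`. At `z = 0` it forces `Re f'(1) > 0`; along
the radius `z = r` it reads `|(1 - f r) / (1 - r)|² ≤ Re f'(1) · (1 - |f r|²) / (1 - r²)`, whose
limit is `|f'(1)|² ≤ (Re f'(1))²`, so `f'(1)` is real. Finally `G = H ∘ f - H / f'(1)` has
non-negative real part by Julia's inequality, and Carathéodory's estimate `|G'(0)| ≤ 2 Re G(0)`
(the Schwarz lemma for `(G - G(0)) / (G + conj G(0))`) rearranges to the bound.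
-/

open Complex ComplexConjugate Metric Set Filter Topology

noncomputable def mobius (a z : ℂ) : ℂ := (a - z) / (1 - conj a * z)

lemma one_sub_conj_mul_ne_zero {a z : ℂ} (ha : ‖a‖ < 1) (hz : ‖z‖ ≤ 1) :
    1 - conj a * z ≠ 0 := by
  rw [sub_ne_zero]
  intro h
  have : ‖conj a * z‖ < 1 := by
    rw [norm_mul, norm_conj]
    nlinarith [norm_nonneg a, norm_nonneg z]
  simp [← h] at this

lemma sq_norm_one_sub_conj_mul_sub_sq_norm_sub (a z : ℂ) :
    ‖1 - conj a * z‖ ^ 2 - ‖a - z‖ ^ 2 = (1 - ‖a‖ ^ 2) * (1 - ‖z‖ ^ 2) := by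
  simp only [← normSq_eq_norm_sq, normSq_apply, sub_re, sub_im, mul_re, mul_im, conj_re,
    conj_im, one_re, one_im]
  ring

lemma one_sub_sq_norm_mobius {a z : ℂ} (h : 1 - conj a * z ≠ 0) :
    1 - ‖mobius a z‖ ^ 2 = (1 - ‖a‖ ^ 2) * (1 - ‖z‖ ^ 2) / ‖1 - conj a * z‖ ^ 2 := by
  rw [← sq_norm_one_sub_conj_mul_sub_sq_norm_sub, mobius, norm_div, div_pow, sub_div,
    div_self (by positivity)]

lemma mobius_mem_ball {a z : ℂ} (ha : a ∈ ball (0 : ℂ) 1) (hz : z ∈ ball (0 : ℂ) 1) :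
    mobius a z ∈ ball (0 : ℂ) 1 := by
  rw [mem_ball_zero_iff] at *
  have hD := one_sub_conj_mul_ne_zero ha hz.le
  have : 0 < 1 - ‖mobius a z‖ ^ 2 := by
    rw [one_sub_sq_norm_mobius hD]
    have := norm_pos_iff.2 hD
    have := (sq_lt_one_iff₀ (norm_nonneg a)).2 ha
    have := (sq_lt_one_iff₀ (norm_nonneg z)).2 hz
    positivity
  exact (sq_lt_one_iff₀ (norm_nonneg _)).1 (by linarith)

lemma mobius_mobius {a z : ℂ} (ha : ‖a‖ < 1) (hz : ‖z‖ ≤ 1) : mobius a (mobius a z) = z := by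
  have hD := one_sub_conj_mul_ne_zero ha hz
  have haa : 1 - conj a * a ≠ 0 := one_sub_conj_mul_ne_zero ha ha.le
  have e₁ : a - mobius a z = z * (1 - conj a * a) / (1 - conj a * z) := by
    rw [mobius, eq_div_iff hD, sub_mul, div_mul_cancel₀ _ hD]; ring
  have e₂ : 1 - conj a * mobius a z = (1 - conj a * a) / (1 - conj a * z) := by
    rw [mobius, eq_div_iff hD, sub_mul, mul_assoc, div_mul_cancel₀ _ hD]; ring
  rw [mobius, e₁, e₂, div_div_div_cancel_right₀ hD, mul_div_cancel_right₀ z haa]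

lemma differentiableOn_mobius {a : ℂ} (ha : ‖a‖ < 1) :
    DifferentiableOn ℂ (mobius a) (closedBall 0 1) := fun _ hz =>
  ((differentiableAt_const a).sub differentiableAt_id |>.div
    ((differentiableAt_const 1).sub ((differentiableAt_const _).mul differentiableAt_id))
    (one_sub_conj_mul_ne_zero ha (mem_closedBall_zero_iff.1 hz))).differentiableWithinAt

theorem norm_mobius_le_of_mapsTo_ball {f : ℂ → ℂ} (hf : DifferentiableOn ℂ f (ball 0 1))
    (hmap : MapsTo f (ball 0 1) (ball 0 1)) {w z : ℂ} (hw : w ∈ ball (0 : ℂ) 1)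
    (hz : z ∈ ball (0 : ℂ) 1) :
    ‖mobius (f w) (f z)‖ ≤ ‖mobius w z‖ := by
  have hw' := mem_ball_zero_iff.1 hw
  have hmob : MapsTo (mobius w) (ball 0 1) (ball 0 1) := fun u hu => mobius_mem_ball hw hu
  set g := mobius (f w) ∘ f ∘ mobius w
  have hg : DifferentiableOn ℂ g (ball 0 1) :=
    ((differentiableOn_mobius (mem_ball_zero_iff.1 (hmap hw))).mono ball_subset_closedBall).comp
      (hf.comp ((differentiableOn_mobius hw').mono ball_subset_closedBall) hmob) (hmap.comp hmob)
  have hg_maps : MapsTo g (ball 0 1) (closedBall 0 1) := fun u hu =>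
    ball_subset_closedBall (mobius_mem_ball (hmap hw) (hmap (hmob hu)))
  have hg0 : g 0 = 0 := by simp [g, mobius]
  simpa [g, mobius_mobius hw' (mem_ball_zero_iff.1 hz).le] using
    norm_le_norm_of_mapsTo_ball hg hg_maps hg0 (mem_ball_zero_iff.1 (mobius_mem_ball hw hz))

theorem schwarz_pick {f : ℂ → ℂ} (hf : DifferentiableOn ℂ f (ball 0 1))
    (hmap : MapsTo f (ball 0 1) (ball 0 1)) {w z : ℂ} (hw : w ∈ ball (0 : ℂ) 1)
    (hz : z ∈ ball (0 : ℂ) 1) :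
    (1 - ‖w‖ ^ 2) * (1 - ‖z‖ ^ 2) / ‖1 - conj w * z‖ ^ 2 ≤
      (1 - ‖f w‖ ^ 2) * (1 - ‖f z‖ ^ 2) / ‖1 - conj (f w) * f z‖ ^ 2 := by
  have hne {a b : ℂ} (ha : a ∈ ball (0 : ℂ) 1) (hb : b ∈ ball (0 : ℂ) 1) :=
    one_sub_conj_mul_ne_zero (mem_ball_zero_iff.1 ha) (mem_ball_zero_iff.1 hb).le
  rw [← one_sub_sq_norm_mobius (hne hw hz), ← one_sub_sq_norm_mobius (hne (hmap hw) (hmap hz))]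
  gcongr
  exact norm_mobius_le_of_mapsTo_ball hf hmap hw hz

lemma sq_norm_add_conj_sub_sq_norm_sub (u v : ℂ) :
    ‖u + conj v‖ ^ 2 - ‖u - v‖ ^ 2 = 4 * u.re * v.re := by
  simp only [← normSq_eq_norm_sq, normSq_apply, add_re, add_im, sub_re, sub_im, conj_re, conj_im]
  ring

lemma norm_sub_le_norm_add_conj {u v : ℂ} (hu : 0 ≤ u.re) (hv : 0 ≤ v.re) :
    ‖u - v‖ ≤ ‖u + conj v‖ := by
  have := sq_norm_add_conj_sub_sq_norm_sub u v
  exact (pow_le_pow_iff_left₀ (norm_nonneg _) (norm_nonneg _) two_ne_zero).1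
    (by nlinarith [mul_nonneg hu hv])

theorem mul_norm_deriv_le_two_mul_re_of_re_pos {G : ℂ → ℂ} {c : ℂ} {R : ℝ} (hR : 0 < R)
    (hG : DifferentiableOn ℂ G (ball c R)) (hre : ∀ z ∈ ball c R, 0 < (G z).re) :
    R * ‖deriv G c‖ ≤ 2 * (G c).re := by
  have hc : c ∈ ball c R := mem_ball_self hR
  have hden : ∀ z ∈ ball c R, G z + conj (G c) ≠ 0 := fun z hz h => by
    have := congrArg re h
    simp only [add_re, conj_re, zero_re] at this
    linarith [hre z hz, hre c hc]
  set h : ℂ → ℂ := fun z => (G z - G c) / (G z + conj (G c))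
  have hh : DifferentiableOn ℂ h (ball c R) := fun z hz =>
    ((hG z hz).sub_const _).div ((hG z hz).add_const _) (hden z hz)
  have hmaps : MapsTo h (ball c R) (closedBall (h c) 1) := fun z hz => by
    simp only [h, sub_self, zero_div, mem_closedBall_zero_iff, norm_div]
    exact div_le_one_of_le₀ (norm_sub_le_norm_add_conj (hre z hz).le (hre c hc).le)
      (norm_nonneg _)
  have hG' : HasDerivAt G (deriv G c) c :=
    (hG.differentiableAt (isOpen_ball.mem_nhds hc)).hasDerivAt
  have hderiv : deriv h c = deriv G c / (2 * (G c).re : ℝ) := by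
    have h2re : ((2 * (G c).re : ℝ) : ℂ) ≠ 0 := ofReal_ne_zero.2 (by linarith [hre c hc])
    rw [((hG'.sub_const _).fun_div (hG'.add_const _) (hden c hc)).deriv, add_conj]
    field_simp
    ring
  have := norm_deriv_le_div_of_mapsTo_ball hh hmaps hR
  rw [hderiv, norm_div, norm_real, Real.norm_of_nonneg (by linarith [hre c hc]),
    div_le_div_iff₀ (by linarith [hre c hc]) hR] at this
  linarith

theorem mul_norm_deriv_le_two_mul_re_of_re_nonneg {G : ℂ → ℂ} {c : ℂ} {R : ℝ} (hR : 0 < R)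
    (hG : DifferentiableOn ℂ G (ball c R)) (hre : ∀ z ∈ ball c R, 0 ≤ (G z).re) :
    R * ‖deriv G c‖ ≤ 2 * (G c).re := by
  refine le_of_forall_pos_le_add fun ε hε => ?_
  have := mul_norm_deriv_le_two_mul_re_of_re_pos hR (hG.add_const ((ε / 2 : ℝ) : ℂ))
    fun z hz => by simp only [add_re, ofReal_re]; linarith [hre z hz]
  simp only [deriv_add_const, add_re, ofReal_re] at this
  linarith

lemma one_sub_ne_zero_of_mem_ball {w : ℂ} (hw : w ∈ ball (0 : ℂ) 1) : 1 - w ≠ 0 :=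
  sub_ne_zero.2 fun h => by simp [← h] at hw

lemma poissonKernel_zero_one (w : ℂ) : poissonKernel 0 w 1 = (1 - ‖w‖ ^ 2) / ‖1 - w‖ ^ 2 := by
  simp [poissonKernel_def]

lemma poissonKernel_zero_one_pos {w : ℂ} (hw : w ∈ ball (0 : ℂ) 1) :
    0 < poissonKernel 0 w 1 := by
  rw [poissonKernel_zero_one]
  have := norm_pos_iff.2 (one_sub_ne_zero_of_mem_ball hw)
  have := (sq_lt_one_iff₀ (norm_nonneg w)).2 (mem_ball_zero_iff.1 hw)
  positivity

lemma pos_of_poissonKernel_zero_le {c : ℝ} {w : ℂ} (hw : w ∈ ball (0 : ℂ) 1)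
    (h : poissonKernel 0 0 1 ≤ c * poissonKernel 0 w 1) : 0 < c := by
  rw [poissonKernel_zero_one 0] at h
  norm_num at h
  exact pos_of_mul_pos_left (one_pos.trans_le h) (poissonKernel_zero_one_pos hw).le

lemma herglotzRieszKernel_zero_one (w : ℂ) : herglotzRieszKernel 0 w 1 = (1 + w) / (1 - w) := by
  simp [herglotzRieszKernel_def, add_comm]

lemma hasDerivAt_herglotzRieszKernel_zero_one {w : ℂ} (hw : 1 - w ≠ 0) :
    HasDerivAt (fun w => herglotzRieszKernel 0 w 1) (2 / (1 - w) ^ 2) w := by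
  have := ((hasDerivAt_id' w).const_add 1).fun_div ((hasDerivAt_id' w).const_sub 1) hw
  rw [funext herglotzRieszKernel_zero_one]
  exact this.congr_deriv (by ring)

lemma tendsto_one_sub_sq_norm_div_one_sub_sq {φ : ℝ → ℂ} {β : ℂ} (hφ : HasDerivAt φ β 1)
    (h1 : φ 1 = 1) :
    Tendsto (fun r => (1 - ‖φ r‖ ^ 2) / (1 - r ^ 2)) (𝓝[≠] 1) (𝓝 β.re) := by
  have hd : HasDerivAt (fun r => ‖φ r‖ ^ 2) (2 * β.re) 1 := by
    simpa [h1] using hφ.norm_sq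
  have h2 : Tendsto (fun r : ℝ => 1 + r) (𝓝[≠] 1) (𝓝 2) :=
    ((continuous_const.add continuous_id).tendsto' 1 2 (by norm_num)).mono_left
      nhdsWithin_le_nhds
  have := hd.tendsto_slope.div h2 two_ne_zero
  rw [mul_div_cancel_left₀ _ two_ne_zero] at this
  refine this.congr' ?_
  have hne : ∀ᶠ r in 𝓝[≠] (1 : ℝ), r ≠ -1 :=
    nhdsWithin_le_nhds (eventually_ne_nhds (by norm_num))
  filter_upwards [self_mem_nhdsWithin, hne] with r (hr : r ≠ 1) hr'
  have : r - 1 ≠ 0 := sub_ne_zero.2 hr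
  have : 1 + r ≠ 0 := fun h => hr' (by linarith)
  rw [Pi.div_apply, slope_def_field, h1, norm_one,
    show (1 : ℝ) - r ^ 2 = -(r - 1) * (1 + r) by ring]
  field_simp
  ring

theorem poissonKernel_le_mul_poissonKernel {f : ℂ → ℂ} {β : ℂ}
    (hf : DifferentiableOn ℂ f (ball 0 1)) (hmap : MapsTo f (ball 0 1) (ball 0 1))
    (hβ : HasDerivAt f β 1) (hfix : f 1 = 1) {z : ℂ} (hz : z ∈ ball (0 : ℂ) 1) :
    poissonKernel 0 z 1 ≤ β.re * poissonKernel 0 (f z) 1 := by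
  have hφ : HasDerivAt (fun r : ℝ => f r) β 1 := hβ.comp_ofReal
  have hA := (tendsto_one_sub_sq_norm_div_one_sub_sq hφ (by simpa using hfix)).mono_left
    (nhdsWithin_mono 1 fun r (hr : r < 1) => hr.ne)
  have hleft : Tendsto (fun r : ℝ => (1 - ‖z‖ ^ 2) / ‖1 - conj (r : ℂ) * z‖ ^ 2) (𝓝[<] 1)
      (𝓝 (poissonKernel 0 z 1)) := by
    have : ContinuousAt (fun r : ℝ => (1 - ‖z‖ ^ 2) / ‖1 - conj (r : ℂ) * z‖ ^ 2) 1 := by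
      refine continuousAt_const.div (by fun_prop) ?_
      simpa using one_sub_ne_zero_of_mem_ball hz
    simpa [poissonKernel_zero_one] using this.tendsto.mono_left nhdsWithin_le_nhds
  have hright : Tendsto (fun r : ℝ => (1 - ‖f r‖ ^ 2) / (1 - r ^ 2) *
      ((1 - ‖f z‖ ^ 2) / ‖1 - conj (f r) * f z‖ ^ 2)) (𝓝[<] 1)
      (𝓝 (β.re * poissonKernel 0 (f z) 1)) := by
    refine hA.mul ?_
    have : ContinuousAt (fun r : ℝ => (1 - ‖f z‖ ^ 2) / ‖1 - conj (f r) * f z‖ ^ 2) 1 := by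
      have : ContinuousAt (fun r : ℝ => conj (f r)) 1 :=
        continuous_conj.continuousAt.comp hφ.continuousAt
      refine continuousAt_const.div (by fun_prop) ?_
      simpa [hfix] using one_sub_ne_zero_of_mem_ball (hmap hz)
    simpa [poissonKernel_zero_one, hfix] using this.tendsto.mono_left nhdsWithin_le_nhds
  refine le_of_tendsto_of_tendsto hleft hright ?_
  filter_upwards [Ioo_mem_nhdsLT (show (-1 : ℝ) < 1 by norm_num)] with r hr
  have hr' : (r : ℂ) ∈ ball (0 : ℂ) 1 := by simpa [abs_lt] using hr
  have hr2 : 0 < 1 - r ^ 2 := by nlinarith [hr.1, hr.2]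
  refine le_of_mul_le_mul_left ?_ hr2
  calc (1 - r ^ 2) * ((1 - ‖z‖ ^ 2) / ‖1 - conj (r : ℂ) * z‖ ^ 2)
      = (1 - ‖(r : ℂ)‖ ^ 2) * (1 - ‖z‖ ^ 2) / ‖1 - conj (r : ℂ) * z‖ ^ 2 := by
        rw [norm_real, Real.norm_eq_abs, sq_abs, mul_div_assoc]
    _ ≤ (1 - ‖f r‖ ^ 2) * (1 - ‖f z‖ ^ 2) / ‖1 - conj (f r) * f z‖ ^ 2 :=
        schwarz_pick hf hmap hr' hz
    _ = (1 - r ^ 2) * ((1 - ‖f r‖ ^ 2) / (1 - r ^ 2) *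
          ((1 - ‖f z‖ ^ 2) / ‖1 - conj (f r) * f z‖ ^ 2)) := by
        field_simp

theorem im_eq_zero_of_poissonKernel_le {φ : ℝ → ℂ} {β : ℂ} (hφ : HasDerivAt φ β 1)
    (h1 : φ 1 = 1)
    (h : ∀ᶠ r : ℝ in 𝓝[<] 1, poissonKernel 0 r 1 ≤ β.re * poissonKernel 0 (φ r) 1) :
    β.im = 0 := by
  have hlt : 𝓝[<] (1 : ℝ) ≤ 𝓝[≠] 1 := nhdsWithin_mono 1 fun r (hr : r < 1) => hr.ne
  have hslope : Tendsto (fun r => ‖slope φ 1 r‖ ^ 2) (𝓝[<] 1) (𝓝 (‖β‖ ^ 2)) :=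
    (hφ.tendsto_slope.norm.pow 2).mono_left hlt
  have hA := ((tendsto_one_sub_sq_norm_div_one_sub_sq hφ h1).const_mul β.re).mono_left hlt
  have hle : ‖β‖ ^ 2 ≤ β.re * β.re := by
    refine le_of_tendsto_of_tendsto hslope hA ?_
    filter_upwards [h, Ioo_mem_nhdsLT (show (-1 : ℝ) < 1 by norm_num)] with r hP hr
    have hr1 : 0 < (1 - r) ^ 2 := by nlinarith [hr.2]
    have hr2 : 0 < 1 - r ^ 2 := by nlinarith [hr.1, hr.2]
    rw [poissonKernel_zero_one, poissonKernel_zero_one, ← ofReal_one, ← ofReal_sub, norm_real,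
      norm_real, Real.norm_eq_abs, Real.norm_eq_abs, sq_abs, sq_abs, ofReal_one] at hP
    have hslope_eq : ‖slope φ 1 r‖ ^ 2 = ‖1 - φ r‖ ^ 2 / (1 - r) ^ 2 := by
      rw [slope_def_module, h1, norm_smul, norm_inv, Real.norm_eq_abs, mul_pow, inv_pow, sq_abs,
        norm_sub_rev, inv_mul_eq_div, show (r - 1) ^ 2 = (1 - r) ^ 2 by ring]
    rw [hslope_eq]
    rcases (sq_nonneg ‖1 - φ r‖).eq_or_lt with hq | hq
    · rw [← hq, div_zero, mul_zero] at hP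
      exact absurd hP (not_le.2 (div_pos hr2 hr1))
    rw [← mul_div_assoc, div_le_div_iff₀ hr1 hq] at hP
    rw [← mul_div_assoc, div_le_div_iff₀ hr1 hr2]
    linarith
  rw [← normSq_eq_norm_sq, normSq_apply] at hle
  have : β.im * β.im ≤ 0 := by linarith
  exact mul_self_eq_zero.1 (le_antisymm this (mul_self_nonneg _))

theorem two_div_re_le_of_poissonKernel_le {f : ℂ → ℂ} {c : ℝ}
    (hf : DifferentiableOn ℂ f (ball 0 1)) (hmap : MapsTo f (ball 0 1) (ball 0 1)) (hc : 0 < c)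
    (hjulia : ∀ z ∈ ball (0 : ℂ) 1, poissonKernel 0 z 1 ≤ c * poissonKernel 0 (f z) 1) :
    2 / ((1 - f 0 ^ 2 + deriv f 0) / (1 - f 0) ^ 2).re ≤ c := by
  set H : ℂ → ℂ := fun w => herglotzRieszKernel 0 w 1
  set G : ℂ → ℂ := fun z => H (f z) - (c⁻¹ : ℝ) * H z
  have hre (w : ℂ) : (H w).re = poissonKernel 0 w 1 :=
    (congrFun poissonKernel_eq_re_herglotzRieszKernel 1).symm
  have hG' {z : ℂ} (hz : z ∈ ball (0 : ℂ) 1) :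
      HasDerivAt G (2 / (1 - f z) ^ 2 * deriv f z - (c⁻¹ : ℝ) * (2 / (1 - z) ^ 2)) z :=
    ((hasDerivAt_herglotzRieszKernel_zero_one (one_sub_ne_zero_of_mem_ball (hmap hz))).comp z
      (hf.differentiableAt (isOpen_ball.mem_nhds hz)).hasDerivAt).sub
      ((hasDerivAt_herglotzRieszKernel_zero_one (one_sub_ne_zero_of_mem_ball hz)).const_mul _)
  have hGre : ∀ z ∈ ball (0 : ℂ) 1, 0 ≤ (G z).re := fun z hz => by
    simp only [G, sub_re, re_ofReal_mul, hre, sub_nonneg]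
    rw [inv_mul_le_iff₀ hc]
    exact hjulia z hz
  have h0 : (0 : ℂ) ∈ ball (0 : ℂ) 1 := mem_ball_self one_pos
  have hcar := mul_norm_deriv_le_two_mul_re_of_re_nonneg one_pos
    (fun z hz => (hG' hz).differentiableAt.differentiableWithinAt) hGre
  rw [(hG' h0).deriv, one_mul] at hcar
  have hX : H (f 0) + deriv f 0 / (1 - f 0) ^ 2 = (1 - f 0 ^ 2 + deriv f 0) / (1 - f 0) ^ 2 := by
    have := one_sub_ne_zero_of_mem_ball (hmap h0)
    simp only [H, herglotzRieszKernel_zero_one]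
    field_simp
    ring
  have key : 2 / c ≤ ((1 - f 0 ^ 2 + deriv f 0) / (1 - f 0) ^ 2).re := by
    have := ((neg_le_abs _).trans (abs_re_le_norm _)).trans hcar
    have hH0 : (H 0).re = 1 := by simp [hre, poissonKernel_zero_one]
    have h2 : (2 / (1 - f 0) ^ 2 * deriv f 0).re = 2 * (deriv f 0 / (1 - f 0) ^ 2).re := by
      rw [div_mul_eq_mul_div, mul_div_assoc, ← ofReal_ofNat, re_ofReal_mul]
    simp only [G, ← hX, sub_re, add_re, re_ofReal_mul, hH0, h2] at this ⊢
    norm_num at this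
    rw [div_eq_mul_inv]
    linarith
  rw [div_le_iff₀ ((by positivity : 0 < 2 / c).trans_le key)]
  rw [div_le_iff₀ hc] at key
  linarith

/-- Sharp boundary Schwarz lemma for holomorphic self-maps of the disc with a boundary
fixed point at 1: f'(1) is real and positive and
f'(1) ≥ 2 / Re((1 - f(0)² + f'(0))/(1 - f(0))²). -/
theorem sharp_boundary_schwarz (f : ℂ → ℂ) (U : Set ℂ) (hU : IsOpen U)
    (h1U : (1 : ℂ) ∈ U)
    (hf : DifferentiableOn ℂ f (Metric.ball 0 1 ∪ U))
    (hmap : ∀ z ∈ Metric.ball (0 : ℂ) 1, f z ∈ Metric.ball (0 : ℂ) 1)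
    (hfix : f 1 = 1) :
    (deriv f 1).im = 0 ∧ 0 < (deriv f 1).re ∧
      2 / (((1 - f 0 ^ 2 + deriv f 0) / (1 - f 0) ^ 2).re) ≤ (deriv f 1).re := by
  have hβ : HasDerivAt f (deriv f 1) 1 :=
    (hf.differentiableAt ((isOpen_ball.union hU).mem_nhds (Or.inr h1U))).hasDerivAt
  have hfD : DifferentiableOn ℂ f (ball 0 1) := hf.mono subset_union_left
  have hjulia := fun z (hz : z ∈ ball (0 : ℂ) 1) =>
    poissonKernel_le_mul_poissonKernel hfD hmap hβ hfix hz
  have h0 : (0 : ℂ) ∈ ball (0 : ℂ) 1 := mem_ball_self one_pos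
  have hpos : 0 < (deriv f 1).re := pos_of_poissonKernel_zero_le (hmap 0 h0) (hjulia 0 h0)
  have hradial : ∀ᶠ r : ℝ in 𝓝[<] 1,
      poissonKernel 0 r 1 ≤ (deriv f 1).re * poissonKernel 0 (f r) 1 := by
    filter_upwards [Ioo_mem_nhdsLT (show (-1 : ℝ) < 1 by norm_num)] with r hr
    exact hjulia r (by simpa [abs_lt] using hr)
  exact ⟨im_eq_zero_of_poissonKernel_le hβ.comp_ofReal (by simpa using hfix) hradial, hpos,
    two_div_re_le_of_poissonKernel_le hfD hmap hpos hjulia⟩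
end

section
/- Let f be a holomorphic self-map of the unit disc 𝔻 extending holomorphically past the boundary point 1, with f(1) = 1, and suppose f(0) = f'(0) = ⋯ = f^{(n-1)}(0) = 0 for some n ≥ 1. Then f'(1) ≥ n, and f'(1) > n unless f(z) = zⁿ. -/
open Metric Set Filter Complex
open scoped Topology ComplexConjugate

lemma aux_norm_le_one {g : ℂ → ℂ} (hg : DifferentiableOn ℂ g (ball (0:ℂ) 1)) (n : ℕ)
    (hb : ∀ z ∈ ball (0:ℂ) 1, ‖z ^ n * g z‖ ≤ 1) :
    ∀ z ∈ ball (0:ℂ) 1, ‖g z‖ ≤ 1 := by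
  intro z hz
  rw [mem_ball_zero_iff] at hz
  have key : ∀ r ∈ Ioo (max ‖z‖ (1/2)) 1, ‖g z‖ ≤ (r⁻¹) ^ n := by
    intro r hr
    obtain ⟨hr1, hr2⟩ := hr
    have hr0 : (0:ℝ) < r := lt_trans (by norm_num : (0:ℝ) < 1/2) ((le_max_right ‖z‖ (1/2)).trans_lt hr1)
    have hsub : closedBall (0:ℂ) r ⊆ ball (0:ℂ) 1 := by
      intro w hw
      rw [mem_closedBall_zero_iff] at hw
      exact mem_ball_zero_iff.2 (lt_of_le_of_lt hw hr2)
    have hdc : DiffContOnCl ℂ g (ball (0:ℂ) r) := by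
      refine ⟨hg.mono (fun w hw => hsub (ball_subset_closedBall hw)), ?_⟩
      refine (hg.continuousOn.mono ?_)
      rw [closure_ball (0:ℂ) hr0.ne']
      exact hsub
    have hfr : ∀ w ∈ frontier (ball (0:ℂ) r), ‖g w‖ ≤ (r⁻¹) ^ n := by
      intro w hw
      rw [frontier_ball (0:ℂ) hr0.ne', mem_sphere_zero_iff_norm] at hw
      have hwball : w ∈ ball (0:ℂ) 1 := mem_ball_zero_iff.2 (hw ▸ hr2)
      have h1 := hb w hwball
      have hwn : ‖w ^ n * g w‖ = r ^ n * ‖g w‖ := by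
        rw [norm_mul, norm_pow, hw]
      rw [hwn] at h1
      have : ‖g w‖ ≤ 1 / r ^ n := by
        rw [le_div_iff₀ (pow_pos hr0 n)]
        linarith [h1]
      simpa [inv_pow, one_div] using this
    have hzr : z ∈ closure (ball (0:ℂ) r) := by
      rw [closure_ball (0:ℂ) hr0.ne']
      exact mem_closedBall_zero_iff.2 (le_of_lt ((le_max_left _ _).trans_lt hr1))
    exact norm_le_of_forall_mem_frontier_norm_le isBounded_ball hdc hfr hzr
  have hlim : Tendsto (fun r : ℝ => (r⁻¹) ^ n) (𝓝[<] (1:ℝ)) (𝓝 1) := by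
    have : Tendsto (fun r : ℝ => (r⁻¹) ^ n) (𝓝 (1:ℝ)) (𝓝 ((1:ℝ)⁻¹ ^ n)) := by
      exact ((continuousAt_inv₀ (by norm_num)).pow n)
    simpa using this.mono_left nhdsWithin_le_nhds
  refine ge_of_tendsto hlim ?_
  have hmem : Ioo (max ‖z‖ (1/2)) 1 ∈ 𝓝[<] (1:ℝ) :=
    Ioo_mem_nhdsLT_of_mem ⟨max_lt hz (by norm_num), le_refl 1⟩
  exact eventually_of_mem hmem key

lemma mobius_lt_one {u w : ℂ} (hu : ‖u‖ < 1) (hw : ‖w‖ < 1) :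
    ‖u - w‖ < ‖1 - conj w * u‖ := by
  have hu' : Complex.normSq u < 1 := by
    have : ‖u‖ ^ 2 < 1 := by nlinarith [norm_nonneg u]
    simpa only [Complex.sq_norm] using this
  have hw' : Complex.normSq w < 1 := by
    have : ‖w‖ ^ 2 < 1 := by nlinarith [norm_nonneg w]
    simpa only [Complex.sq_norm] using this
  have key : Complex.normSq (u - w) < Complex.normSq (1 - conj w * u) := by
    simp only [Complex.normSq_apply, Complex.sub_re, Complex.sub_im, Complex.mul_re,
      Complex.mul_im, Complex.one_re, Complex.one_im, Complex.conj_re, Complex.conj_im] at *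
    nlinarith [mul_pos (sub_pos.2 hu') (sub_pos.2 hw')]
  have h1 : ‖u - w‖ ^ 2 < ‖1 - conj w * u‖ ^ 2 := by
    simpa only [Complex.sq_norm] using key
  exact lt_of_pow_lt_pow_left₀ 2 (norm_nonneg _) h1

lemma mobius_ge_bound {u w : ℂ} {t : ℝ} (hu : ‖u‖ ≤ t) (ht : t ≤ 1) (hw : ‖w‖ < 1) :
    ‖u + w‖ * (1 + ‖w‖ * t) ≤ (t + ‖w‖) * ‖1 + conj w * u‖ := by
  have h0t : 0 ≤ t := le_trans (norm_nonneg u) hu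
  set a := ‖w‖ with ha
  set s := ‖u‖ with hs
  have hs0 : 0 ≤ s := norm_nonneg u
  have ha0 : 0 ≤ a := norm_nonneg w
  set x := (conj w * u).re with hx
  have hxle : x ≤ a * s := by
    calc x ≤ ‖conj w * u‖ := Complex.re_le_norm _
    _ = a * s := by
      rw [norm_mul]
      simp [ha, hs]
  have hnsq1 : ‖u + w‖ ^ 2 = s ^ 2 + a ^ 2 + 2 * x := by
    rw [hs, ha, hx]
    simp only [Complex.sq_norm, Complex.normSq_apply, Complex.add_re,
      Complex.add_im, Complex.mul_re, Complex.mul_im, Complex.conj_re, Complex.conj_im]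
    ring
  have hnsq2 : ‖1 + conj w * u‖ ^ 2 = 1 + a ^ 2 * s ^ 2 + 2 * x := by
    rw [hs, ha, hx]
    simp only [Complex.sq_norm, Complex.normSq_apply, Complex.add_re,
      Complex.add_im, Complex.mul_re, Complex.mul_im, Complex.conj_re, Complex.conj_im,
      Complex.one_re, Complex.one_im]
    ring
  refine le_of_pow_le_pow_left₀ two_ne_zero (by positivity) ?_
  rw [mul_pow, mul_pow, hnsq1, hnsq2]
  have hint1 : 0 ≤ (1 - a^2) * (1 - t^2) * (a*s - x) := by
    refine mul_nonneg (mul_nonneg ?_ ?_) (by linarith)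
    · nlinarith
    · nlinarith
  have hint2 : 0 ≤ (t - s) * (1 - a^2) * ((t+a)*(1+a*s) + (s+a)*(1+a*t)) := by
    refine mul_nonneg (mul_nonneg (by linarith) (by nlinarith)) (by positivity)
  nlinarith [hint1, hint2]

lemma aux_schwarz_pick {g : ℂ → ℂ} (hg : DifferentiableOn ℂ g (ball (0:ℂ) 1))
    (hlt : ∀ z ∈ ball (0:ℂ) 1, ‖g z‖ < 1) {z : ℂ} (hz : z ∈ ball (0:ℂ) 1) :
    ‖g z‖ * (1 + ‖g 0‖ * ‖z‖) ≤ (‖z‖ + ‖g 0‖) := by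
  have h0 : (0:ℂ) ∈ ball (0:ℂ) 1 := by simp
  set w := g 0 with hw
  have ha : ‖w‖ < 1 := hlt 0 h0
  have hden : ∀ u : ℂ, ‖u‖ < 1 → 1 - conj w * u ≠ 0 := by
    intro u hu h
    have h1 : (1:ℂ) = conj w * u := by linear_combination h
    have : (1:ℝ) = ‖conj w * u‖ := by rw [← h1]; simp
    rw [norm_mul] at this
    simp only [RCLike.norm_conj] at this
    nlinarith [norm_nonneg u, norm_nonneg w]
  set h : ℂ → ℂ := fun z => (g z - w) / (1 - conj w * g z) with hh
  have hdiff : DifferentiableOn ℂ h (ball (0:ℂ) 1) := by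
    refine DifferentiableOn.div (hg.sub (differentiableOn_const w))
      ((differentiableOn_const (1:ℂ)).sub ((differentiableOn_const _).mul hg)) ?_
    intro u hu
    exact hden _ (hlt u hu)
  have hmaps : Set.MapsTo h (ball (0:ℂ) 1) (ball (0:ℂ) 1) := by
    intro u hu
    rw [mem_ball_zero_iff, hh]
    simp only
    rw [norm_div, div_lt_one (norm_pos_iff.2 (hden _ (hlt u hu)))]
    exact mobius_lt_one (hlt u hu) ha
  have h00 : h 0 = 0 := by
    rw [hh]
    simp [← hw]
  have hsch : ‖h z‖ ≤ ‖z‖ := by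
    refine Complex.norm_le_norm_of_mapsTo_ball hdiff (hmaps.mono_right ball_subset_closedBall) h00 ?_
    simpa using mem_ball_zero_iff.1 hz
  set u := h z with hu
  have hu1 : ‖u‖ < 1 := mem_ball_zero_iff.1 (hmaps hz)
  have hglt : ‖g z‖ < 1 := hlt z hz
  have hdenz := hden _ hglt
  have hkey : g z * (1 + conj w * u) = u + w := by
    rw [hu, hh]
    simp only
    linear_combination -(div_mul_cancel₀ (g z - w) hdenz)
  have hden2 : (1:ℂ) + conj w * u ≠ 0 := by
    intro h0'
    have h1 : (1:ℂ) = -(conj w * u) := by linear_combination h0'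
    have : (1:ℝ) = ‖conj w * u‖ := by rw [← norm_neg, ← h1]; simp
    rw [norm_mul] at this
    simp only [RCLike.norm_conj] at this
    nlinarith [norm_nonneg u, norm_nonneg w]
  have hnorm : ‖g z‖ * ‖1 + conj w * u‖ = ‖u + w‖ := by
    rw [← norm_mul, hkey]
  have hb := mobius_ge_bound (t := ‖z‖) (by simpa using hsch)
    (le_of_lt (mem_ball_zero_iff.1 hz)) ha
  -- combine
  have hpos : 0 < ‖(1:ℂ) + conj w * u‖ := norm_pos_iff.2 hden2
  have h1at : (0:ℝ) < 1 + ‖w‖ * ‖z‖ := by positivity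
  rw [← hnorm] at hb
  refine (mul_le_mul_iff_left₀ hpos).1 ?_
  calc ‖g z‖ * (1 + ‖w‖ * ‖z‖) * ‖1 + conj w * u‖
      = ‖g z‖ * ‖1 + conj w * u‖ * (1 + ‖w‖ * ‖z‖) := by ring
  _ ≤ (‖z‖ + ‖w‖) * ‖1 + conj w * u‖ := hb

set_option maxHeartbeats 1000000 in
/-- For a holomorphic self-map of the disc with boundary fixed point 1 vanishing to
order n at 0, the boundary derivative satisfies f'(1) ≥ n, with equality only for
f(z) = zⁿ. -/
theorem boundary_schwarz_vanishing_order (f : ℂ → ℂ) (U : Set ℂ) (hU : IsOpen U)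
    (h1U : (1 : ℂ) ∈ U)
    (hf : DifferentiableOn ℂ f (Metric.ball 0 1 ∪ U))
    (hmap : ∀ z ∈ Metric.ball (0 : ℂ) 1, f z ∈ Metric.ball (0 : ℂ) 1)
    (hfix : f 1 = 1)
    (n : ℕ) (hn : 1 ≤ n) (hvan : ∀ k < n, iteratedDeriv k f 0 = 0) :
    (deriv f 1).im = 0 ∧ (n : ℝ) ≤ (deriv f 1).re ∧
      ((deriv f 1).re = n → ∀ z ∈ Metric.ball (0 : ℂ) 1, f z = z ^ n) := by
  classical
  -- ### Setup: the open set W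
  obtain ⟨ε, hε0, hballU⟩ := Metric.isOpen_iff.1 hU 1 h1U
  set δ : ℝ := min ε (1/2) with hδdef
  have hδ0 : 0 < δ := lt_min hε0 (by norm_num)
  have hδU : ball (1:ℂ) δ ⊆ U := Subset.trans (ball_subset_ball (min_le_left _ _)) hballU
  set W : Set ℂ := ball (0:ℂ) 1 ∪ ball (1:ℂ) δ with hWdef
  have hWopen : IsOpen W := isOpen_ball.union isOpen_ball
  have h0W : (0:ℂ) ∈ W := Or.inl (by simp)
  have h1W : (1:ℂ) ∈ W := Or.inr (mem_ball_self hδ0)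
  have hWf : DifferentiableOn ℂ f W := hf.mono (union_subset_union subset_rfl hδU)
  have hW0 : W ∈ 𝓝 (0:ℂ) := hWopen.mem_nhds h0W
  have hW1 : W ∈ 𝓝 (1:ℂ) := hWopen.mem_nhds h1W
  -- ### Power series at 0 and vanishing of the first n coefficients
  have hfa : AnalyticAt ℂ f 0 := hWf.analyticAt hW0
  obtain ⟨p, hp⟩ := hfa
  have hcoeff : ∀ k, k < n → p.coeff k = 0 := by
    intro k hk
    obtain ⟨r, hpr⟩ := hp
    have h1 := hpr.factorial_smul (y := (1:ℂ)) k
    rw [← iteratedDeriv_eq_iteratedFDeriv, hvan k hk] at h1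
    have h2 : (Nat.factorial k : ℂ) * p.coeff k = 0 := by
      rw [← nsmul_eq_mul]
      exact h1
    have h3 : (Nat.factorial k : ℂ) ≠ 0 := Nat.cast_ne_zero.2 (Nat.factorial_ne_zero k)
    exact (mul_eq_zero.1 h2).resolve_left h3
  -- ### The factorization f z = z ^ n * g z
  set g : ℂ → ℂ := (Function.swap dslope 0)^[n] f with hgdef
  have hval : ∀ k, ((Function.swap dslope 0)^[k] f) 0 = p.coeff k := by
    intro k
    have h1 := hp.has_fpower_series_iterate_dslope_fslope k
    have h2 := (h1.coeff_zero 1).symm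
    rw [show (FormalMultilinearSeries.fslope^[k] p) 0 1 =
      (FormalMultilinearSeries.fslope^[k] p).coeff 0 from rfl,
      FormalMultilinearSeries.coeff_iterate_fslope] at h2
    simpa using h2
  have hgk : ∀ k, k ≤ n → ∀ z, f z = z ^ k * ((Function.swap dslope 0)^[k] f) z := by
    intro k
    induction k with
    | zero => intro _ z; simp
    | succ k ih =>
      intro hk z
      have hk' : k < n := Nat.lt_of_succ_le hk
      have e1 : (z - 0) • dslope ((Function.swap dslope 0)^[k] f) 0 z =
          ((Function.swap dslope 0)^[k] f) z - ((Function.swap dslope 0)^[k] f) 0 :=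
        sub_smul_dslope _ 0 z
      rw [hval k, hcoeff k hk', sub_zero, sub_zero] at e1
      rw [Function.iterate_succ_apply']
      calc f z = z ^ k * ((Function.swap dslope 0)^[k] f) z := ih hk'.le z
      _ = z ^ k * (z • dslope ((Function.swap dslope 0)^[k] f) 0 z) := by rw [e1]
      _ = z ^ (k+1) * Function.swap dslope 0 ((Function.swap dslope 0)^[k] f) z := by
          rw [smul_eq_mul]; unfold Function.swap; ring
  have hfact : ∀ z, f z = z ^ n * g z := hgk n le_rfl
  have hgWk : ∀ k, DifferentiableOn ℂ ((Function.swap dslope 0)^[k] f) W := by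
    intro k
    induction k with
    | zero => exact hWf
    | succ m ih =>
      rw [Function.iterate_succ_apply']
      exact (differentiableOn_dslope hW0).2 ih
  have hgW : DifferentiableOn ℂ g W := hgWk n
  have hgball1 : DifferentiableOn ℂ g (ball (0:ℂ) 1) := hgW.mono subset_union_left
  have hg1 : g 1 = 1 := by
    have := hfact 1
    rw [hfix, one_pow, one_mul] at this
    exact this.symm
  have hgball : ∀ z ∈ ball (0:ℂ) 1, ‖g z‖ ≤ 1 := by
    refine aux_norm_le_one hgball1 n ?_
    intro z hz
    rw [← hfact z]
    exact le_of_lt (mem_ball_zero_iff.1 (hmap z hz))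
  have hgd : DifferentiableAt ℂ g 1 := hgW.differentiableAt hW1
  set d : ℂ := deriv g 1 with hd
  have hgdd : HasDerivAt g d 1 := hgd.hasDerivAt
  have hfd : deriv f 1 = n + d := by
    have h1 : HasDerivAt (fun z : ℂ => z ^ n * g z)
        ((n * 1 ^ (n-1)) * g 1 + 1 ^ n * d) 1 := (hasDerivAt_pow n 1).mul hgdd
    have h2 : HasDerivAt f ((n * 1 ^ (n-1)) * g 1 + 1 ^ n * d) 1 := by
      have : f = fun z : ℂ => z ^ n * g z := funext hfact
      rw [this]
      exact h1
    rw [h2.deriv, hg1]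
    simp
  -- ### Part A : the imaginary part of d vanishes
  have hbd : ∀ z : ℂ, ‖z‖ = 1 → z ∈ ball (1:ℂ) δ → ‖g z‖ ≤ 1 := by
    intro z hz1 hzδ
    have hcont : ContinuousAt g z :=
      (hgW.differentiableAt (hWopen.mem_nhds (Or.inr hzδ))).continuousAt
    have htend : Tendsto (fun r : ℝ => (r:ℂ) * z) (𝓝[<] (1:ℝ)) (𝓝 z) := by
      have h1 : Tendsto (fun r : ℝ => (r:ℂ) * z) (𝓝 (1:ℝ)) (𝓝 ((1:ℝ) * z)) :=
        (Complex.continuous_ofReal.mul continuous_const).continuousAt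
      simpa using h1.mono_left nhdsWithin_le_nhds
    have htend2 : Tendsto (fun r : ℝ => ‖g ((r:ℂ) * z)‖) (𝓝[<] (1:ℝ)) (𝓝 ‖g z‖) :=
      ((hcont.tendsto.comp htend).norm)
    refine le_of_tendsto htend2 ?_
    filter_upwards [Ioo_mem_nhdsLT_of_mem
      (⟨by norm_num, le_refl (1:ℝ)⟩ : (1:ℝ) ∈ Ioc (0:ℝ) 1)] with r hr
    refine hgball _ ?_
    rw [mem_ball_zero_iff, norm_mul, hz1, mul_one]
    simpa [abs_of_pos hr.1] using hr.2
  have hA : d.im = 0 := by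
    have hγ : HasDerivAt (fun θ : ℝ => Complex.exp ((θ:ℂ) * Complex.I)) Complex.I 0 := by
      have h0 : HasDerivAt (fun θ : ℝ => ((θ:ℂ))) 1 0 := by
        simpa using (hasDerivAt_id (0:ℝ)).ofReal_comp
      have h1 : HasDerivAt (fun θ : ℝ => ((θ:ℂ) * Complex.I)) (1 * Complex.I) 0 :=
        h0.mul_const Complex.I
      have h2 := h1.cexp
      simpa using h2
    have hG : HasDerivAt (fun θ : ℝ => g (Complex.exp ((θ:ℂ) * Complex.I))) (d * Complex.I) 0 := by
      have h2 : HasDerivAt g d (Complex.exp (((0:ℝ):ℂ) * Complex.I)) := by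
        rw [show (((0:ℝ):ℂ) * Complex.I) = 0 by simp, Complex.exp_zero]
        exact hgdd
      have h3 := (h2.hasFDerivAt.restrictScalars ℝ).comp_hasDerivAt 0 hγ
      have h4 : (ContinuousLinearMap.restrictScalars ℝ
          (ContinuousLinearMap.smulRight (1 : ℂ →L[ℂ] ℂ) d)) Complex.I = d * Complex.I := by
        simp [mul_comm]
      simpa [Function.comp_def, h4, mul_comm] using h3
    set G : ℝ → ℂ := fun θ : ℝ => g (Complex.exp ((θ:ℂ) * Complex.I)) with hGdef
    have hG0 : G 0 = 1 := by
      rw [hGdef]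
      simp only [Complex.ofReal_zero, zero_mul, Complex.exp_zero]
      exact hg1
    have hre : HasDerivAt (fun θ : ℝ => (G θ).re) ((d * Complex.I).re) 0 := by
      have := Complex.reCLM.hasFDerivAt.comp_hasDerivAt 0 hG
      simpa [Function.comp_def] using this
    have him : HasDerivAt (fun θ : ℝ => (G θ).im) ((d * Complex.I).im) 0 := by
      have := Complex.imCLM.hasFDerivAt.comp_hasDerivAt 0 hG
      simpa [Function.comp_def] using this
    set ψ : ℝ → ℝ := fun θ => (G θ).re ^ 2 + (G θ).im ^ 2 with hψdef
    have hψd : HasDerivAt ψ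
        (2 * (G 0).re ^ 1 * (d * Complex.I).re + 2 * (G 0).im ^ 1 * (d * Complex.I).im) 0 := by
      have h5 := ((hre.pow 2).add (him.pow 2))
      simpa [Nat.cast_ofNat, hψdef, Pi.add_def, Pi.pow_def] using h5
    have hψmax : IsLocalMax ψ 0 := by
      have hev : ∀ᶠ θ : ℝ in 𝓝 0, Complex.exp ((θ:ℂ) * Complex.I) ∈ ball (1:ℂ) δ := by
        have hcont : ContinuousAt (fun θ : ℝ => Complex.exp ((θ:ℂ) * Complex.I)) 0 :=
          (Complex.continuous_exp.comp
            (Complex.continuous_ofReal.mul continuous_const)).continuousAt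
        refine hcont.eventually_mem (isOpen_ball.mem_nhds ?_)
        simp only [Complex.ofReal_zero, zero_mul, Complex.exp_zero]
        exact mem_ball_self hδ0
      filter_upwards [hev] with θ hθ
      have hnorm1 : ‖Complex.exp ((θ:ℂ) * Complex.I)‖ = 1 := Complex.norm_exp_ofReal_mul_I θ
      have hle : ‖G θ‖ ≤ 1 := hbd _ hnorm1 hθ
      have h6 : ψ θ = ‖G θ‖ ^ 2 := by
        rw [hψdef]
        simp only
        rw [Complex.sq_norm, Complex.normSq_apply]
        ring
      have h7 : ψ 0 = 1 := by
        rw [hψdef]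
        simp only [hG0]
        norm_num
      rw [h6, h7]
      nlinarith [norm_nonneg (G θ)]
    have h8 := hψmax.hasDerivAt_eq_zero hψd
    rw [hG0] at h8
    simp only [Complex.one_re, Complex.one_im, pow_one, mul_zero, zero_mul, add_zero,
      mul_one] at h8
    have h9 : (d * Complex.I).re = 0 := by linarith
    rw [Complex.mul_re, Complex.I_re, Complex.I_im] at h9
    simpa using h9
  -- ### Part B : the real part of d is nonnegative
  have hB : 0 ≤ d.re := by
    have hreal : HasDerivAt (fun t : ℝ => g ((t:ℂ))) d 1 := hgdd.comp_ofReal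
    have hre' : HasDerivAt (fun t : ℝ => (g ((t:ℂ))).re) d.re 1 := by
      have := Complex.reCLM.hasFDerivAt.comp_hasDerivAt 1 hreal
      simpa [Function.comp_def] using this
    rw [hasDerivAt_iff_tendsto_slope] at hre'
    have hre'' : Tendsto (slope (fun t : ℝ => (g ((t:ℂ))).re) 1) (𝓝[<] (1:ℝ)) (𝓝 d.re) :=
      hre'.mono_left (nhdsWithin_mono 1 (fun x hx => ne_of_lt hx))
    refine ge_of_tendsto hre'' ?_
    filter_upwards [Ioo_mem_nhdsLT_of_mem
      (⟨by norm_num, le_refl (1:ℝ)⟩ : (1:ℝ) ∈ Ioc (0:ℝ) 1)] with t ht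
    have htball : ((t:ℂ)) ∈ ball (0:ℂ) 1 := by
      rw [mem_ball_zero_iff]
      simpa [Complex.norm_real, abs_of_pos ht.1] using ht.2
    have h1 : (g ((t:ℂ))).re ≤ 1 :=
      le_trans (Complex.re_le_norm _) (by simpa using hgball _ htball)
    have h2 : slope (fun t : ℝ => (g ((t:ℂ))).re) 1 t
        = ((g ((t:ℂ))).re - 1) / (t - 1) := by
      rw [slope_def_field]
      rw [show ((1:ℝ):ℂ) = (1:ℂ) by norm_num, hg1]
      simp [div_eq_div_iff]
    rw [h2]
    exact div_nonneg_of_nonpos (by linarith [ht.2]) (by linarith [ht.2])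
  -- ### Conclusion
  have hfd_im : (deriv f 1).im = 0 := by
    rw [hfd]
    simp [hA]
  have hfd_re : (n : ℝ) ≤ (deriv f 1).re := by
    rw [hfd]
    simp only [Complex.add_re, Complex.natCast_re]
    linarith
  refine ⟨hfd_im, hfd_re, ?_⟩
  intro he z hz
  have hdre : d.re = 0 := by
    rw [hfd] at he
    simp only [Complex.add_re, Complex.natCast_re] at he
    linarith
  have hd0 : d = 0 := Complex.ext hdre hA
  by_cases hcase : ∀ u ∈ ball (0:ℂ) 1, ‖g u‖ < 1
  · exfalso
    have h00 : (0:ℂ) ∈ ball (0:ℂ) 1 := by simp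
    obtain ⟨a, hadef⟩ : ∃ a : ℝ, a = ‖g 0‖ := ⟨_, rfl⟩
    have ha1 : a < 1 := by rw [hadef]; exact hcase 0 h00
    have ha0 : 0 ≤ a := by rw [hadef]; exact norm_nonneg _
    set g₂ : ℂ → ℂ := dslope (dslope g 1) 1 with hg₂def
    have hg₂W : DifferentiableOn ℂ g₂ W :=
      (differentiableOn_dslope hW1).2 ((differentiableOn_dslope hW1).2 hgW)
    have hg₂cont : ContinuousAt g₂ 1 := (hg₂W.differentiableAt hW1).continuousAt
    have hquad : ∀ u : ℂ, ‖g u - 1‖ = ‖u - 1‖ ^ 2 * ‖g₂ u‖ := by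
      intro u
      have e1 : (u - 1) • dslope g 1 u = g u - g 1 := sub_smul_dslope g 1 u
      have e2 : (u - 1) • g₂ u = dslope g 1 u - dslope g 1 1 := sub_smul_dslope (dslope g 1) 1 u
      have e3 : dslope g 1 1 = 0 := by
        rw [dslope_same]
        rw [← hd, hd0]
      rw [e3, sub_zero] at e2
      rw [hg1] at e1
      have e4 : g u - 1 = (u - 1) ^ 2 * g₂ u := by
        rw [← e1, smul_eq_mul, ← e2, smul_eq_mul]
        ring
      rw [e4]
      rw [norm_mul, norm_pow]
    obtain ⟨C, hCdef⟩ : ∃ C : ℝ, C = ‖g₂ 1‖ + 1 := ⟨_, rfl⟩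
    have hC0 : 0 < C := by rw [hCdef]; positivity
    obtain ⟨ε₂, hε₂0, hε₂⟩ : ∃ ε₂ > 0, ∀ u : ℂ, dist u 1 < ε₂ → ‖g₂ u‖ ≤ C := by
      have hev : ∀ᶠ u : ℂ in 𝓝 1, ‖g₂ u‖ ≤ C :=
        hg₂cont.norm.eventually_le_const (by rw [hCdef]; linarith)
      rcases Metric.eventually_nhds_iff.1 hev with ⟨ε₂, hε₂0, hε₂'⟩
      exact ⟨ε₂, hε₂0, fun u hu => hε₂' hu⟩
    obtain ⟨η, hηdef⟩ : ∃ η : ℝ, η = min ε₂ ((1 - a) / (4 * C)) := ⟨_, rfl⟩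
    have hη0 : 0 < η := by
      rw [hηdef]
      exact lt_min hε₂0 (div_pos (by linarith) (by positivity))
    obtain ⟨t, htdef⟩ : ∃ t : ℝ, t = 1 - min η 1 / 2 := ⟨_, rfl⟩
    have hmin0 : 0 < min η 1 := lt_min hη0 one_pos
    have hmin1 : min η 1 ≤ 1 := min_le_right _ _
    have ht0 : 0 < t := by rw [htdef]; linarith
    have ht1 : t < 1 := by rw [htdef]; linarith
    have h1t : 1 - t = min η 1 / 2 := by rw [htdef]; ring
    have h1tε₂ : 1 - t < ε₂ := by
      rw [h1t]
      have h5 : min η 1 ≤ η := min_le_left _ _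
      have h6 : η ≤ ε₂ := by rw [hηdef]; exact min_le_left _ _
      linarith
    have h1tC : 1 - t ≤ (1 - a) / (4 * C) := by
      rw [h1t]
      have h5 : min η 1 ≤ η := min_le_left _ _
      have h6 : η ≤ (1 - a) / (4 * C) := by rw [hηdef]; exact min_le_right _ _
      linarith
    have htball : ((t:ℂ)) ∈ ball (0:ℂ) 1 := by
      rw [mem_ball_zero_iff, Complex.norm_real, Real.norm_eq_abs, abs_of_pos ht0]
      exact ht1
    have hnormt : ‖((t:ℂ))‖ = t := by
      rw [Complex.norm_real, Real.norm_eq_abs, abs_of_pos ht0]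
    -- lower bound from Schwarz-Pick
    have hb1 := aux_schwarz_pick hgball1 hcase htball
    rw [hnormt, ← hadef] at hb1
    have hgt1 : ‖g ((t:ℂ))‖ ≤ 1 := hgball _ htball
    have hlow : (1 - a) * (1 - t) / 2 ≤ 1 - ‖g ((t:ℂ))‖ := by
      have hp1 : (0:ℝ) ≤ (1 - ‖g ((t:ℂ))‖) * (1 - a * t) := by
        refine mul_nonneg (by linarith) ?_
        nlinarith
      nlinarith [hb1, hp1]
    -- upper bound from the double zero of g - 1 at 1
    have h6 : ‖((t:ℂ)) - 1‖ = 1 - t := by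
      rw [show ((t:ℂ)) - 1 = (((t - 1 : ℝ)):ℂ) by push_cast; ring]
      rw [Complex.norm_real, Real.norm_eq_abs, abs_of_nonpos (by linarith : t - 1 ≤ 0)]
      ring
    have hup : 1 - ‖g ((t:ℂ))‖ ≤ C * (1 - t) ^ 2 := by
      have h5 : 1 - ‖g ((t:ℂ))‖ ≤ ‖g ((t:ℂ)) - 1‖ := by
        have h5' := norm_sub_norm_le (1:ℂ) (g ((t:ℂ)))
        rw [norm_sub_rev] at h5'
        simpa using h5'
      have h7 : ‖g₂ ((t:ℂ))‖ ≤ C := by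
        refine hε₂ _ ?_
        rw [Complex.dist_eq, h6]
        linarith
      calc 1 - ‖g ((t:ℂ))‖ ≤ ‖g ((t:ℂ)) - 1‖ := h5
      _ = ‖((t:ℂ)) - 1‖ ^ 2 * ‖g₂ ((t:ℂ))‖ := hquad _
      _ = (1 - t) ^ 2 * ‖g₂ ((t:ℂ))‖ := by rw [h6]
      _ ≤ (1 - t) ^ 2 * C := mul_le_mul_of_nonneg_left h7 (sq_nonneg _)
      _ = C * (1 - t) ^ 2 := by ring
    -- contradiction
    have hfin : (1 - a) * (1 - t) / 2 ≤ C * (1 - t) ^ 2 := le_trans hlow hup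
    have h1tpos : 0 < 1 - t := by linarith
    have h8 : C * (1 - t) ≤ (1 - a) / 4 := by
      have h8' := mul_le_mul_of_nonneg_left h1tC (le_of_lt hC0)
      have h8'' : C * ((1 - a) / (4 * C)) = (1 - a) / 4 := by
        field_simp
      rw [h8''] at h8'
      exact h8'
    have h9 := mul_le_mul_of_nonneg_right h8 (le_of_lt h1tpos)
    have h10a : 0 < 1 - a := by linarith
    have h10 : 0 < (1 - a) * (1 - t) := mul_pos h10a h1tpos
    nlinarith [hfin, h9, h10]
  · push_neg at hcase
    obtain ⟨z₀, hz₀, hz₀1⟩ := hcase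
    have hz₀norm : ‖g z₀‖ = 1 := le_antisymm (hgball _ hz₀) hz₀1
    have hmax : IsMaxOn (norm ∘ g) (ball (0:ℂ) 1) z₀ := by
      intro u hu
      simp only [Function.comp_apply, hz₀norm]
      exact hgball _ hu
    have heq := Complex.eqOn_of_isPreconnected_of_isMaxOn_norm
      (convex_ball (0:ℂ) 1).isPreconnected isOpen_ball hgball1 hz₀ hmax
    -- the constant value is 1, by continuity at 1 along the radius
    have hcont1 : ContinuousAt g 1 := hgd.continuousAt
    have htendr : Tendsto (fun r : ℝ => g ((r:ℂ))) (𝓝[<] (1:ℝ)) (𝓝 (g 1)) := by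
      have h1 : Tendsto (fun r : ℝ => ((r:ℂ))) (𝓝 (1:ℝ)) (𝓝 ((1:ℝ):ℂ)) :=
        Complex.continuous_ofReal.continuousAt
      have h2 : Tendsto (fun r : ℝ => g ((r:ℂ))) (𝓝 (1:ℝ)) (𝓝 (g 1)) := by
        refine ContinuousAt.comp ?_ h1
        simpa using hcont1
      exact h2.mono_left nhdsWithin_le_nhds
    have hgz₀ : g z₀ = g 1 := by
      have hev : (fun r : ℝ => g ((r:ℂ))) =ᶠ[𝓝[<] (1:ℝ)] fun _ => g z₀ := by
        filter_upwards [Ioo_mem_nhdsLT_of_mem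
          (⟨by norm_num, le_refl (1:ℝ)⟩ : (1:ℝ) ∈ Ioc (0:ℝ) 1)] with r hr
        have hrball : ((r:ℂ)) ∈ ball (0:ℂ) 1 := by
          rw [mem_ball_zero_iff]
          simpa [Complex.norm_real, abs_of_pos hr.1] using hr.2
        exact heq hrball
      exact (tendsto_nhds_unique (htendr.congr' hev) tendsto_const_nhds).symm
    rw [hg1] at hgz₀
    rw [hfact z, heq hz, Function.const_apply, hgz₀, mul_one]
end
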